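/- arXiv:1801.05294 — 2 statements merged into one kernel-verified Lean document; each statement's English description precedes it below -/
import Mathlib

section
/- The covariance between the outputs of two distributed binary-block-encoders is bounded by the weighted correlation of their dependency spectra: for a pair of discrete memoryless sources (X^n, Y^n) with maximal correlation ψ, and Boolean functions e : 𝒳^n → {0,1}, f : 𝒴^n → {0,1} with centered versions ẽ, f̃ and dependency spectra (P_i), (Q_i), one has |E[ẽ(X^n) · f̃(Y^n)]| ≤ Σ_{i∈{0,1}^n} ψ^{w_H(i)} · √(P_i · Q_i). -/
set_option linter.unusedSectionVars false
set_option maxHeartbeats 1000000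


open Finset

noncomputable section

namespace BBE

variable {𝒳 𝒴 : Type*} [Fintype 𝒳] [Fintype 𝒴] [DecidableEq 𝒳] [DecidableEq 𝒴]

/-- Expectation under the `n`-fold product of the pmf `PX` on `𝒳`. -/
def EX {n : ℕ} (PX : 𝒳 → ℝ) (g : (Fin n → 𝒳) → ℝ) : ℝ :=
  ∑ x : Fin n → 𝒳, (∏ i, PX (x i)) * g x

/-- Joint expectation under the `n`-fold product of the joint pmf `PXY` on `𝒳 × 𝒴`. -/
def EJ {n : ℕ} (PXY : 𝒳 × 𝒴 → ℝ) (g : (Fin n → 𝒳) → (Fin n → 𝒴) → ℝ) : ℝ :=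
  ∑ ω : Fin n → 𝒳 × 𝒴, (∏ i, PXY (ω i)) * g (fun i => (ω i).1) (fun i => (ω i).2)

def margX (PXY : 𝒳 × 𝒴 → ℝ) (x : 𝒳) : ℝ := ∑ y, PXY (x, y)

def margY (PXY : 𝒳 × 𝒴 → ℝ) (y : 𝒴) : ℝ := ∑ x, PXY (x, y)

/-- The centered real-valued version `ẽ` of a Boolean function `e`. -/
def centered {n : ℕ} (PX : 𝒳 → ℝ) (e : (Fin n → 𝒳) → Bool) (x : Fin n → 𝒳) : ℝ :=
  (if e x then (1 : ℝ) else 0) - EX PX (fun x' => if e x' then (1 : ℝ) else 0)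

/-- Conditional expectation `E[g(Xⁿ) | X_S = x_S]` under the product pmf. -/
def condExp {n : ℕ} (PX : 𝒳 → ℝ) (g : (Fin n → 𝒳) → ℝ) (S : Finset (Fin n))
    (x : Fin n → 𝒳) : ℝ :=
  ∑ x' : Fin n → 𝒳,
    (∏ i, if i ∈ S then (if x' i = x i then (1 : ℝ) else 0) else PX (x' i)) * g x'

/-- The component `g_S` of the decomposition, defined recursively by
`g_S = E[g | X_S] - ∑_{T ⊂ S} g_T`. -/
def comp {n : ℕ} (PX : 𝒳 → ℝ) (g : (Fin n → 𝒳) → ℝ) (S : Finset (Fin n))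
    (x : Fin n → 𝒳) : ℝ :=
  condExp PX g S x - ∑ T ∈ (S.powerset.erase S).attach, comp PX g T.1 x
termination_by S.card
decreasing_by
  obtain ⟨T, hT⟩ := T
  simp only [Finset.mem_erase, Finset.mem_powerset] at hT
  exact Finset.card_lt_card (lt_of_le_of_ne (Finset.le_iff_subset.mpr hT.2) hT.1)

/-- Variance under the product pmf. -/
def varX {n : ℕ} (PX : 𝒳 → ℝ) (g : (Fin n → 𝒳) → ℝ) : ℝ :=
  EX PX (fun x => (g x - EX PX g) ^ 2)

/-- The set of correlations `E[h(X)·g(Y)]` over zero-mean unit-variance single-letter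
functions; its supremum is the maximal correlation. -/
def corrSet (PXY : 𝒳 × 𝒴 → ℝ) : Set ℝ :=
  {r | ∃ h : 𝒳 → ℝ, ∃ g : 𝒴 → ℝ,
    (∑ x, margX PXY x * h x) = 0 ∧ (∑ y, margY PXY y * g y) = 0 ∧
    (∑ x, margX PXY x * h x ^ 2) = 1 ∧ (∑ y, margY PXY y * g y ^ 2) = 1 ∧
    r = ∑ p : 𝒳 × 𝒴, PXY p * (h p.1 * g p.2)}



section Generic

variable {α : Type*} [Fintype α] [DecidableEq α] {n : ℕ}

lemma prod_update_eq (p : α → ℝ) (x : Fin n → α) (k : Fin n) (a : α) :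
    (∏ i, p (Function.update x k a i)) = p a * ∏ i ∈ Finset.univ.erase k, p (x i) := by
  have h1 : (fun i => p (Function.update x k a i)) = Function.update (fun i => p (x i)) k (p a) := by
    funext i
    rcases eq_or_ne i k with rfl | h
    · simp
    · simp [Function.update_of_ne h]
  calc (∏ i, p (Function.update x k a i))
      = ∏ i, Function.update (fun i => p (x i)) k (p a) i :=
        Finset.prod_congr rfl (fun i _ => congrFun h1 i)
    _ = p a * ∏ i ∈ Finset.univ.erase k, p (x i) := by
        rw [Finset.erase_eq]; exact Finset.prod_update_of_mem (Finset.mem_univ k) _ _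

lemma helperB (p : α → ℝ) (hp : (∑ a, p a) = 1) (k : Fin n) (φ : (Fin n → α) → ℝ) :
    ∑ x : Fin n → α, (∏ i, p (x i)) * φ x
      = ∑ x : Fin n → α, (∏ i, p (x i)) * ∑ a, p a * φ (Function.update x k a) := by
  have h3 : ∀ x : Fin n → α, (∏ i, p (x i)) = p (x k) * ∏ i ∈ Finset.univ.erase k, p (x i) :=
    fun x => (Finset.mul_prod_erase _ _ (Finset.mem_univ k)).symm
  let E : ((Fin n → α) × α) ≃ ((Fin n → α) × α) :=
    { toFun := fun q => (Function.update q.1 k q.2, q.1 k)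
      invFun := fun q => (Function.update q.1 k q.2, q.1 k)
      left_inv := by
        intro q
        simp [Function.update_idem, Function.update_eq_self]
      right_inv := by
        intro q
        simp [Function.update_idem, Function.update_eq_self] }
  have hE := Equiv.sum_comp E (fun q : (Fin n → α) × α =>
    (∏ i, p (q.1 i)) * (p q.2 * φ (Function.update q.1 k q.2)))
  have hEval : ∀ q : (Fin n → α) × α,
      (∏ i, p ((E q).1 i)) * (p (E q).2 * φ (Function.update (E q).1 k (E q).2))
        = p q.2 * ((∏ i, p (q.1 i)) * φ q.1) := by
    intro ⟨x, a⟩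
    show (∏ i, p (Function.update x k a i)) * (p (x k) * φ (Function.update (Function.update x k a) k (x k)))
      = p a * ((∏ i, p (x i)) * φ x)
    rw [Function.update_idem, Function.update_eq_self, prod_update_eq, h3 x]
    ring
  calc ∑ x : Fin n → α, (∏ i, p (x i)) * φ x
      = ∑ x : Fin n → α, (1 : ℝ) * ((∏ i, p (x i)) * φ x) := by simp
    _ = ∑ x : Fin n → α, ∑ a, p a * ((∏ i, p (x i)) * φ x) := by
        refine Finset.sum_congr rfl fun x _ => ?_
        rw [← Finset.sum_mul, hp]
    _ = ∑ q : (Fin n → α) × α, p q.2 * ((∏ i, p (q.1 i)) * φ q.1) := by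
        rw [Fintype.sum_prod_type]
    _ = ∑ q : (Fin n → α) × α,
          (∏ i, p ((E q).1 i)) * (p (E q).2 * φ (Function.update (E q).1 k (E q).2)) := by
        exact (Finset.sum_congr rfl fun q _ => (hEval q).symm)
    _ = ∑ q : (Fin n → α) × α, (∏ i, p (q.1 i)) * (p q.2 * φ (Function.update q.1 k q.2)) := hE
    _ = ∑ x : Fin n → α, (∏ i, p (x i)) * ∑ a, p a * φ (Function.update x k a) := by
        rw [Fintype.sum_prod_type]
        exact Finset.sum_congr rfl fun x _ => by rw [Finset.mul_sum]

lemma helperB0 (p : α → ℝ) (hp : (∑ a, p a) = 1) (k : Fin n) (φ : (Fin n → α) → ℝ)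
    (h0 : ∀ x, ∑ a, p a * φ (Function.update x k a) = 0) :
    ∑ x : Fin n → α, (∏ i, p (x i)) * φ x = 0 := by
  rw [helperB p hp k φ]
  calc ∑ x : Fin n → α, (∏ i, p (x i)) * ∑ a, p a * φ (Function.update x k a)
      = ∑ x : Fin n → α, (∏ i, p (x i)) * 0 := Finset.sum_congr rfl fun x _ => by rw [h0]
    _ = 0 := by simp


end Generic

section Decomp
variable {𝒳 : Type*} [Fintype 𝒳] [DecidableEq 𝒳] {n : ℕ}
lemma comp_eq (PX : 𝒳 → ℝ) (g : (Fin n → 𝒳) → ℝ) (S : Finset (Fin n)) (x : Fin n → 𝒳) :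
    comp PX g S x = condExp PX g S x - ∑ T ∈ S.powerset.erase S, comp PX g T x := by
  rw [comp, ← Finset.sum_attach (S.powerset.erase S) (fun T => comp PX g T x)]

lemma sum_comp_powerset (PX : 𝒳 → ℝ) (g : (Fin n → 𝒳) → ℝ) (S : Finset (Fin n))
    (x : Fin n → 𝒳) :
    ∑ T ∈ S.powerset, comp PX g T x = condExp PX g S x := by
  have hS : S ∈ S.powerset := Finset.mem_powerset_self S
  rw [← Finset.add_sum_erase _ _ hS, comp_eq]
  ring

lemma condExp_update (PX : 𝒳 → ℝ) (g : (Fin n → 𝒳) → ℝ) (S : Finset (Fin n))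
    (k : Fin n) (hk : k ∉ S) (x : Fin n → 𝒳) (a : 𝒳) :
    condExp PX g S (Function.update x k a) = condExp PX g S x := by
  unfold condExp
  refine Finset.sum_congr rfl fun x' _ => ?_
  congr 1
  refine Finset.prod_congr rfl fun i _ => ?_
  by_cases hi : i ∈ S
  · have : i ≠ k := fun h => hk (h ▸ hi)
    simp [hi, Function.update_of_ne this]
  · simp [hi]

lemma comp_update (PX : 𝒳 → ℝ) (g : (Fin n → 𝒳) → ℝ) (S : Finset (Fin n))
    (k : Fin n) (hk : k ∉ S) (x : Fin n → 𝒳) (a : 𝒳) :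
    comp PX g S (Function.update x k a) = comp PX g S x := by
  induction S using Finset.strongInduction with
  | _ S ih =>
    rw [comp_eq, comp_eq, condExp_update PX g S k hk]
    congr 1
    refine Finset.sum_congr rfl fun T hT => ?_
    simp only [Finset.mem_erase, Finset.mem_powerset] at hT
    exact ih T (lt_of_le_of_ne hT.2 hT.1) (fun h => hk (hT.2 h))

lemma condExp_avg (PX : 𝒳 → ℝ) (g : (Fin n → 𝒳) → ℝ) (S : Finset (Fin n))
    (k : Fin n) (hk : k ∈ S) (x : Fin n → 𝒳) :
    ∑ a, PX a * condExp PX g S (Function.update x k a) = condExp PX g (S.erase k) x := by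
  unfold condExp
  have hL : ∀ (a : 𝒳) (x' : Fin n → 𝒳),
      (∏ i, if i ∈ S then (if x' i = Function.update x k a i then (1:ℝ) else 0) else PX (x' i))
        = (if x' k = a then (1:ℝ) else 0) *
          ∏ i ∈ Finset.univ.erase k,
            (if i ∈ S then (if x' i = x i then (1:ℝ) else 0) else PX (x' i)) := by
    intro a x'
    rw [← Finset.mul_prod_erase Finset.univ _ (Finset.mem_univ k)]
    congr 1
    · simp [hk]
    · refine Finset.prod_congr rfl fun i hi => ?_
      have : i ≠ k := (Finset.mem_erase.mp hi).1
      rw [Function.update_of_ne this]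
  have hR : ∀ x' : Fin n → 𝒳,
      (∏ i, if i ∈ S.erase k then (if x' i = x i then (1:ℝ) else 0) else PX (x' i))
        = PX (x' k) *
          ∏ i ∈ Finset.univ.erase k,
            (if i ∈ S then (if x' i = x i then (1:ℝ) else 0) else PX (x' i)) := by
    intro x'
    rw [← Finset.mul_prod_erase Finset.univ _ (Finset.mem_univ k)]
    congr 1
    · simp
    · refine Finset.prod_congr rfl fun i hi => ?_
      have hik : i ≠ k := (Finset.mem_erase.mp hi).1
      simp [Finset.mem_erase, hik]
  simp only [Finset.mul_sum]
  rw [Finset.sum_comm]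
  refine Finset.sum_congr rfl fun x' _ => ?_
  rw [hR x']
  calc ∑ a, PX a * ((∏ i, if i ∈ S then (if x' i = Function.update x k a i then (1:ℝ) else 0)
          else PX (x' i)) * g x')
      = ∑ a, (if x' k = a then PX a else 0) *
          ((∏ i ∈ Finset.univ.erase k,
            (if i ∈ S then (if x' i = x i then (1:ℝ) else 0) else PX (x' i))) * g x') := by
        refine Finset.sum_congr rfl fun a _ => ?_
        rw [hL a x']
        by_cases h : x' k = a <;> simp [h] <;> ring
    _ = PX (x' k) *
          ((∏ i ∈ Finset.univ.erase k,
            (if i ∈ S then (if x' i = x i then (1:ℝ) else 0) else PX (x' i))) * g x') := by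
        rw [← Finset.sum_mul, Finset.sum_ite_eq]
        simp
    _ = PX (x' k) *
          (∏ i ∈ Finset.univ.erase k,
            (if i ∈ S then (if x' i = x i then (1:ℝ) else 0) else PX (x' i))) * g x' := by ring

lemma comp_avg (PX : 𝒳 → ℝ) (hp : (∑ a, PX a) = 1) (g : (Fin n → 𝒳) → ℝ)
    (S : Finset (Fin n)) (k : Fin n) (hk : k ∈ S) (x : Fin n → 𝒳) :
    ∑ a, PX a * comp PX g S (Function.update x k a) = 0 := by
  induction S using Finset.strongInduction generalizing x with
  | _ S ih =>
    have hsplit : ∀ a, comp PX g S (Function.update x k a)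
        = condExp PX g S (Function.update x k a)
          - ∑ T ∈ S.powerset.erase S, comp PX g T (Function.update x k a) :=
      fun a => comp_eq PX g S _
    simp only [hsplit, mul_sub, Finset.sum_sub_distrib]
    rw [condExp_avg PX g S k hk x]
    have hswap : ∑ a, PX a * ∑ T ∈ S.powerset.erase S, comp PX g T (Function.update x k a)
        = ∑ T ∈ S.powerset.erase S, ∑ a, PX a * comp PX g T (Function.update x k a) := by
      simp only [Finset.mul_sum]
      exact Finset.sum_comm
    rw [hswap]
    have hT : ∀ T ∈ S.powerset.erase S,
        ∑ a, PX a * comp PX g T (Function.update x k a)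
          = if k ∈ T then 0 else comp PX g T x := by
      intro T hT
      simp only [Finset.mem_erase, Finset.mem_powerset] at hT
      by_cases hkT : k ∈ T
      · rw [if_pos hkT]
        exact ih T (lt_of_le_of_ne hT.2 hT.1) hkT x
      · rw [if_neg hkT]
        calc ∑ a, PX a * comp PX g T (Function.update x k a)
            = ∑ a, PX a * comp PX g T x :=
              Finset.sum_congr rfl fun a _ => by rw [comp_update PX g T k hkT]
          _ = comp PX g T x := by rw [← Finset.sum_mul, hp, one_mul]
    rw [Finset.sum_congr rfl hT, Finset.sum_ite, Finset.sum_const_zero, zero_add]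
    have hfilter : (S.powerset.erase S).filter (fun T => k ∉ T) = (S.erase k).powerset := by
      ext T
      simp only [Finset.mem_filter, Finset.mem_erase, Finset.mem_powerset,
        Finset.subset_erase]
      constructor
      · rintro ⟨⟨hne, hsub⟩, hkT⟩; exact ⟨hsub, hkT⟩
      · rintro ⟨hsub, hkT⟩
        exact ⟨⟨fun h => hkT (h ▸ hk), hsub⟩, hkT⟩
    rw [hfilter, sum_comp_powerset]
    ring

lemma sum_weights (PX : 𝒳 → ℝ) (hp : (∑ a, PX a) = 1) :
    ∑ x : Fin n → 𝒳, (∏ i, PX (x i)) = 1 := by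
  have h := Finset.prod_univ_sum (fun _ : Fin n => (Finset.univ : Finset 𝒳))
    (fun _ a => PX a)
  rw [Fintype.piFinset_univ] at h
  rw [← h]
  simp [hp]

lemma EX_const (PX : 𝒳 → ℝ) (hp : (∑ a, PX a) = 1) (c : ℝ) :
    EX (n := n) PX (fun _ => c) = c := by
  unfold EX
  rw [← Finset.sum_mul, sum_weights PX hp, one_mul]

lemma condExp_univ (PX : 𝒳 → ℝ) (g : (Fin n → 𝒳) → ℝ) (x : Fin n → 𝒳) :
    condExp PX g Finset.univ x = g x := by
  unfold condExp
  have : ∀ x' : Fin n → 𝒳,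
      (∏ i, if i ∈ (Finset.univ : Finset (Fin n)) then (if x' i = x i then (1:ℝ) else 0)
        else PX (x' i)) = if x' = x then (1:ℝ) else 0 := by
    intro x'
    simp only [Finset.mem_univ, if_true]
    rw [Finset.prod_boole]
    by_cases h : x' = x
    · rw [if_pos (by simp [h]), if_pos h]
    · rw [if_neg (by simpa [funext_iff] using h), if_neg h]
  rw [Finset.sum_congr rfl (fun x' _ => by rw [this x'])]
  simp only [ite_mul, one_mul, zero_mul]
  rw [Finset.sum_ite_eq' Finset.univ x g]
  simp

lemma sum_comp_univ (PX : 𝒳 → ℝ) (g : (Fin n → 𝒳) → ℝ) (x : Fin n → 𝒳) :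
    ∑ S : Finset (Fin n), comp PX g S x = g x := by
  rw [← Finset.powerset_univ, sum_comp_powerset, condExp_univ]

lemma comp_empty (PX : 𝒳 → ℝ) (g : (Fin n → 𝒳) → ℝ) (x : Fin n → 𝒳) :
    comp PX g ∅ x = EX PX g := by
  rw [comp_eq]
  simp only [Finset.powerset_empty, Finset.erase_singleton, Finset.sum_empty, sub_zero]
  unfold condExp EX
  refine Finset.sum_congr rfl fun x' _ => ?_
  simp

lemma EX_comp_zero (PX : 𝒳 → ℝ) (hp : (∑ a, PX a) = 1) (g : (Fin n → 𝒳) → ℝ)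
    (hg : EX PX g = 0) (S : Finset (Fin n)) :
    EX PX (comp PX g S) = 0 := by
  rcases S.eq_empty_or_nonempty with rfl | hne
  · have hc : comp PX g ∅ = fun _ : Fin n → 𝒳 => (0:ℝ) :=
      funext fun x => by rw [comp_empty, hg]
    rw [hc]
    exact EX_const PX hp 0
  · obtain ⟨k, hk⟩ := hne
    exact helperB0 PX hp k _ (fun x => comp_avg PX hp g S k hk x)

lemma varX_comp (PX : 𝒳 → ℝ) (hp : (∑ a, PX a) = 1) (g : (Fin n → 𝒳) → ℝ)
    (hg : EX PX g = 0) (S : Finset (Fin n)) :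
    varX PX (comp PX g S) = EX PX (fun x => (comp PX g S x) ^ 2) := by
  unfold varX
  rw [EX_comp_zero PX hp g hg S]
  simp

lemma EX_centered (PX : 𝒳 → ℝ) (hp : (∑ a, PX a) = 1) (e : (Fin n → 𝒳) → Bool) :
    EX PX (centered PX e) = 0 := by
  unfold centered EX
  simp only [mul_sub, Finset.sum_sub_distrib]
  rw [← Finset.sum_mul, sum_weights PX hp, one_mul]
  exact sub_self _


end Decomp

section Joint
variable (PXY : 𝒳 × 𝒴 → ℝ)

lemma margX_nonneg (hnn : ∀ p, 0 ≤ PXY p) (a : 𝒳) : 0 ≤ margX PXY a :=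
  Finset.sum_nonneg fun b _ => hnn (a, b)

lemma margY_nonneg (hnn : ∀ p, 0 ≤ PXY p) (b : 𝒴) : 0 ≤ margY PXY b :=
  Finset.sum_nonneg fun a _ => hnn (a, b)

lemma sum_margX (hsum : ∑ p : 𝒳 × 𝒴, PXY p = 1) : ∑ a, margX PXY a = 1 := by
  rw [← hsum, Fintype.sum_prod_type]; rfl

lemma sum_margY (hsum : ∑ p : 𝒳 × 𝒴, PXY p = 1) : ∑ b, margY PXY b = 1 := by
  rw [← hsum, Fintype.sum_prod_type_right]; rfl

lemma PXY_le_margX (hnn : ∀ p, 0 ≤ PXY p) (a : 𝒳) (b : 𝒴) : PXY (a, b) ≤ margX PXY a :=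
  Finset.single_le_sum (fun b' _ => hnn (a, b')) (Finset.mem_univ b)

lemma PXY_le_margY (hnn : ∀ p, 0 ≤ PXY p) (a : 𝒳) (b : 𝒴) : PXY (a, b) ≤ margY PXY b :=
  Finset.single_le_sum (fun a' _ => hnn (a', b)) (Finset.mem_univ a)

lemma PXY_zero_of_margX (hnn : ∀ p, 0 ≤ PXY p) {a : 𝒳} (h : margX PXY a = 0) (b : 𝒴) :
    PXY (a, b) = 0 :=
  le_antisymm (h ▸ PXY_le_margX PXY hnn a b) (hnn (a, b))

lemma PXY_zero_of_margY (hnn : ∀ p, 0 ≤ PXY p) {b : 𝒴} (h : margY PXY b = 0) (a : 𝒳) :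
    PXY (a, b) = 0 :=
  le_antisymm (h ▸ PXY_le_margY PXY hnn a b) (hnn (a, b))

lemma sum_fst (ρ : 𝒳 → ℝ) : ∑ p : 𝒳 × 𝒴, PXY p * ρ p.1 = ∑ a, margX PXY a * ρ a := by
  rw [Fintype.sum_prod_type]
  exact Finset.sum_congr rfl fun a _ => by rw [margX, Finset.sum_mul]

lemma sum_snd (ρ : 𝒴 → ℝ) : ∑ p : 𝒳 × 𝒴, PXY p * ρ p.2 = ∑ b, margY PXY b * ρ b := by
  rw [Fintype.sum_prod_type_right]
  exact Finset.sum_congr rfl fun b _ => by rw [margY, Finset.sum_mul]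

lemma exists_unit {α : Type*} [Fintype α] [DecidableEq α] (m : α → ℝ)
    (x₁ x₂ : α) (hne : x₁ ≠ x₂) (h1 : 0 < m x₁) (h2 : 0 < m x₂) :
    ∃ h : α → ℝ, (∑ x, m x * h x) = 0 ∧ (∑ x, m x * h x ^ 2) = 1 := by
  set s : ℝ := m x₁ + m x₂ with hs
  have hspos : (0:ℝ) < s := add_pos h1 h2
  set h : α → ℝ := fun x => if x = x₁ then Real.sqrt (m x₂ / (m x₁ * s))
    else if x = x₂ then -Real.sqrt (m x₁ / (m x₂ * s)) else 0 with hh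
  have hpair : ∀ f : α → ℝ, (∀ x, x ≠ x₁ → x ≠ x₂ → f x = 0) →
      ∑ x, f x = f x₁ + f x₂ := by
    intro f hf
    rw [← Finset.sum_subset (Finset.subset_univ {x₁, x₂})
      (fun x _ hx => by
        simp only [Finset.mem_insert, Finset.mem_singleton, not_or] at hx
        exact hf x hx.1 hx.2)]
    exact Finset.sum_pair hne
  have hx1 : h x₁ = Real.sqrt (m x₂ / (m x₁ * s)) := by simp [hh]
  have hx2 : h x₂ = -Real.sqrt (m x₁ / (m x₂ * s)) := by simp [hh, hne.symm]
  refine ⟨h, ?_, ?_⟩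
  · rw [hpair _ (fun x hne1 hne2 => by simp [hh, hne1, hne2])]
    rw [hx1, hx2]
    have e1 : m x₁ * Real.sqrt (m x₂ / (m x₁ * s)) = Real.sqrt (m x₁ * m x₂ / s) := by
      rw [← Real.sqrt_sq h1.le, ← Real.sqrt_mul (by positivity)]
      congr 1
      field_simp
      rw [Real.sq_sqrt (by positivity)]
    have e2 : m x₂ * Real.sqrt (m x₁ / (m x₂ * s)) = Real.sqrt (m x₁ * m x₂ / s) := by
      rw [← Real.sqrt_sq h2.le, ← Real.sqrt_mul (by positivity)]
      congr 1
      field_simp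
      rw [Real.sq_sqrt (by positivity)]
    rw [mul_neg, e1, e2]
    ring
  · rw [hpair _ (fun x hne1 hne2 => by simp [hh, hne1, hne2])]
    rw [hx1, hx2]
    rw [neg_sq, Real.sq_sqrt (by positivity), Real.sq_sqrt (by positivity)]
    field_simp
    ring

lemma psi_nonneg
    (hX2 : ∃ x₁ x₂ : 𝒳, x₁ ≠ x₂ ∧ 0 < margX PXY x₁ ∧ 0 < margX PXY x₂)
    (hY2 : ∃ y₁ y₂ : 𝒴, y₁ ≠ y₂ ∧ 0 < margY PXY y₁ ∧ 0 < margY PXY y₂)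
    (ψ : ℝ) (hψ : IsLUB (corrSet PXY) ψ) : 0 ≤ ψ := by
  obtain ⟨x₁, x₂, hxne, hp₁, hp₂⟩ := hX2
  obtain ⟨y₁, y₂, hyne, hq₁, hq₂⟩ := hY2
  obtain ⟨h, hm, hv⟩ := exists_unit (margX PXY) x₁ x₂ hxne hp₁ hp₂
  obtain ⟨g, gm, gv⟩ := exists_unit (margY PXY) y₁ y₂ hyne hq₁ hq₂
  set r : ℝ := ∑ p : 𝒳 × 𝒴, PXY p * (h p.1 * g p.2) with hr
  have h1 : r ∈ corrSet PXY := ⟨h, g, hm, gm, hv, gv, rfl⟩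
  have h2 : -r ∈ corrSet PXY := by
    refine ⟨h, fun b => -(g b), hm, by simp [mul_neg, gm], hv, by simpa using gv, ?_⟩
    rw [hr, ← Finset.sum_neg_distrib]
    exact Finset.sum_congr rfl fun p _ => by ring
  have := hψ.1 h1
  have := hψ.1 h2
  linarith

lemma single_letter_centered
    (hnn : ∀ p, 0 ≤ PXY p)
    (ψ : ℝ) (hψ : IsLUB (corrSet PXY) ψ) (hψ0 : 0 ≤ ψ)
    (h : 𝒳 → ℝ) (g : 𝒴 → ℝ)
    (hh : ∑ a, margX PXY a * h a = 0) (hg : ∑ b, margY PXY b * g b = 0) :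
    |∑ p : 𝒳 × 𝒴, PXY p * (h p.1 * g p.2)|
      ≤ ψ * Real.sqrt (∑ a, margX PXY a * h a ^ 2)
          * Real.sqrt (∑ b, margY PXY b * g b ^ 2) := by
  set Vh := ∑ a, margX PXY a * h a ^ 2 with hVh
  set Vg := ∑ b, margY PXY b * g b ^ 2 with hVg
  have hVh0 : 0 ≤ Vh := Finset.sum_nonneg fun a _ =>
    mul_nonneg (margX_nonneg PXY hnn a) (sq_nonneg _)
  have hVg0 : 0 ≤ Vg := Finset.sum_nonneg fun b _ =>
    mul_nonneg (margY_nonneg PXY hnn b) (sq_nonneg _)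
  have hRHS : 0 ≤ ψ * Real.sqrt Vh * Real.sqrt Vg := by positivity
  by_cases hVhz : Vh = 0
  · have hz : ∀ a, margX PXY a ≠ 0 → h a = 0 := by
      intro a ha
      have h0 := (Finset.sum_eq_zero_iff_of_nonneg (fun a' _ =>
        mul_nonneg (margX_nonneg PXY hnn a') (sq_nonneg (h a')))).mp hVhz a (Finset.mem_univ a)
      rcases mul_eq_zero.mp h0 with h' | h'
      · exact absurd h' ha
      · exact pow_eq_zero_iff (n := 2) (by norm_num) |>.mp h'
    have : ∑ p : 𝒳 × 𝒴, PXY p * (h p.1 * g p.2) = 0 := by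
      apply Finset.sum_eq_zero
      intro p _
      by_cases hpa : margX PXY p.1 = 0
      · have : PXY p = 0 := by
          have := PXY_zero_of_margX PXY hnn hpa p.2
          simpa using this
        rw [this, zero_mul]
      · rw [hz p.1 hpa, zero_mul, mul_zero]
    rw [this, abs_zero]
    exact hRHS
  by_cases hVgz : Vg = 0
  · have hz : ∀ b, margY PXY b ≠ 0 → g b = 0 := by
      intro b hb
      have h0 := (Finset.sum_eq_zero_iff_of_nonneg (fun b' _ =>
        mul_nonneg (margY_nonneg PXY hnn b') (sq_nonneg (g b')))).mp hVgz b (Finset.mem_univ b)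
      rcases mul_eq_zero.mp h0 with h' | h'
      · exact absurd h' hb
      · exact pow_eq_zero_iff (n := 2) (by norm_num) |>.mp h'
    have : ∑ p : 𝒳 × 𝒴, PXY p * (h p.1 * g p.2) = 0 := by
      apply Finset.sum_eq_zero
      intro p _
      by_cases hpb : margY PXY p.2 = 0
      · have : PXY p = 0 := by
          have := PXY_zero_of_margY PXY hnn hpb p.1
          simpa using this
        rw [this, zero_mul]
      · rw [hz p.2 hpb, mul_zero, mul_zero]
    rw [this, abs_zero]
    exact hRHS
  · have hVhp : 0 < Vh := lt_of_le_of_ne hVh0 (Ne.symm hVhz)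
    have hVgp : 0 < Vg := lt_of_le_of_ne hVg0 (Ne.symm hVgz)
    set ch := Real.sqrt Vh with hch
    set cg := Real.sqrt Vg with hcg
    have hchp : 0 < ch := Real.sqrt_pos.mpr hVhp
    have hcgp : 0 < cg := Real.sqrt_pos.mpr hVgp
    set h₀ : 𝒳 → ℝ := fun a => h a / ch with hh₀
    set g₀ : 𝒴 → ℝ := fun b => g b / cg with hg₀
    have hsq_h : ch ^ 2 = Vh := Real.sq_sqrt hVh0
    have hsq_g : cg ^ 2 = Vg := Real.sq_sqrt hVg0
    have mem1 : (∑ p : 𝒳 × 𝒴, PXY p * (h₀ p.1 * g₀ p.2)) ∈ corrSet PXY := by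
      refine ⟨h₀, g₀, ?_, ?_, ?_, ?_, rfl⟩
      · simp only [hh₀, mul_div_assoc']
        rw [← Finset.sum_div, hh, zero_div]
      · simp only [hg₀, mul_div_assoc']
        rw [← Finset.sum_div, hg, zero_div]
      · have : ∀ a, margX PXY a * (h a / ch) ^ 2 = (margX PXY a * h a ^ 2) / ch ^ 2 := by
          intro a; field_simp
        rw [Finset.sum_congr rfl fun a _ => this a, ← Finset.sum_div, ← hVh, hsq_h,
          div_self hVhp.ne']
      · have : ∀ b, margY PXY b * (g b / cg) ^ 2 = (margY PXY b * g b ^ 2) / cg ^ 2 := by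
          intro b; field_simp
        rw [Finset.sum_congr rfl fun b _ => this b, ← Finset.sum_div, ← hVg, hsq_g,
          div_self hVgp.ne']
    have mem2 : (-(∑ p : 𝒳 × 𝒴, PXY p * (h₀ p.1 * g₀ p.2))) ∈ corrSet PXY := by
      obtain ⟨h', g', c1, c2, c3, c4, c5⟩ := mem1
      refine ⟨h', fun b => -(g' b), c1, by simp [mul_neg, c2], c3, by simpa using c4, ?_⟩
      rw [c5, ← Finset.sum_neg_distrib]
      exact Finset.sum_congr rfl fun p _ => by ring
    have habs : |∑ p : 𝒳 × 𝒴, PXY p * (h₀ p.1 * g₀ p.2)| ≤ ψ :=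
      abs_le.mpr ⟨by linarith [hψ.1 mem2], hψ.1 mem1⟩
    have hscale : ∑ p : 𝒳 × 𝒴, PXY p * (h p.1 * g p.2)
        = ch * cg * ∑ p : 𝒳 × 𝒴, PXY p * (h₀ p.1 * g₀ p.2) := by
      rw [Finset.mul_sum]
      refine Finset.sum_congr rfl fun p _ => ?_
      simp only [hh₀, hg₀]
      field_simp
    rw [hscale, abs_mul, abs_mul, abs_of_pos hchp, abs_of_pos hcgp]
    calc ch * cg * |∑ p : 𝒳 × 𝒴, PXY p * (h₀ p.1 * g₀ p.2)|
        ≤ ch * cg * ψ := by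
          apply mul_le_mul_of_nonneg_left habs (by positivity)
      _ = ψ * ch * cg := by ring

lemma single_letter
    (hnn : ∀ p, 0 ≤ PXY p) (hsum : ∑ p : 𝒳 × 𝒴, PXY p = 1)
    (ψ : ℝ) (hψ : IsLUB (corrSet PXY) ψ) (hψ0 : 0 ≤ ψ)
    (h : 𝒳 → ℝ) (g : 𝒴 → ℝ)
    (hg : ∑ b, margY PXY b * g b = 0) :
    |∑ p : 𝒳 × 𝒴, PXY p * (h p.1 * g p.2)|
      ≤ ψ * Real.sqrt (∑ a, margX PXY a * h a ^ 2)
          * Real.sqrt (∑ b, margY PXY b * g b ^ 2) := by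
  set m := ∑ a, margX PXY a * h a with hm
  set h' : 𝒳 → ℝ := fun a => h a - m with hh'
  have hcent : ∑ a, margX PXY a * h' a = 0 := by
    simp only [hh', mul_sub, Finset.sum_sub_distrib, ← hm]
    rw [← Finset.sum_mul, sum_margX PXY hsum, one_mul]
    ring
  have hsame : ∑ p : 𝒳 × 𝒴, PXY p * (h p.1 * g p.2)
      = ∑ p : 𝒳 × 𝒴, PXY p * (h' p.1 * g p.2) := by
    have expand : ∀ p : 𝒳 × 𝒴, PXY p * (h p.1 * g p.2)
        = PXY p * (h' p.1 * g p.2) + m * (PXY p * g p.2) := by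
      intro p; simp only [hh']; ring
    rw [Finset.sum_congr rfl fun p _ => expand p, Finset.sum_add_distrib,
      ← Finset.mul_sum, sum_snd PXY g, hg, mul_zero, add_zero]
  have hVle : ∑ a, margX PXY a * h' a ^ 2 ≤ ∑ a, margX PXY a * h a ^ 2 := by
    have expand : ∀ a, margX PXY a * h' a ^ 2
        = margX PXY a * h a ^ 2 - (2*m) * (margX PXY a * h a) + m^2 * margX PXY a := by
      intro a; simp only [hh']; ring
    rw [Finset.sum_congr rfl fun a _ => expand a]
    rw [Finset.sum_add_distrib, Finset.sum_sub_distrib, ← Finset.mul_sum, ← Finset.mul_sum,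
      ← hm, sum_margX PXY hsum]
    nlinarith [sq_nonneg m]
  calc |∑ p : 𝒳 × 𝒴, PXY p * (h p.1 * g p.2)|
      = |∑ p : 𝒳 × 𝒴, PXY p * (h' p.1 * g p.2)| := by rw [hsame]
    _ ≤ ψ * Real.sqrt (∑ a, margX PXY a * h' a ^ 2)
          * Real.sqrt (∑ b, margY PXY b * g b ^ 2) :=
        single_letter_centered PXY hnn ψ hψ hψ0 h' g hcent hg
    _ ≤ ψ * Real.sqrt (∑ a, margX PXY a * h a ^ 2)
          * Real.sqrt (∑ b, margY PXY b * g b ^ 2) := by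
        apply mul_le_mul_of_nonneg_right _ (Real.sqrt_nonneg _)
        exact mul_le_mul_of_nonneg_left (Real.sqrt_le_sqrt hVle) hψ0

def Kker (PXY : 𝒳 × 𝒴 → ℝ) (a : 𝒳) (b : 𝒴) : ℝ :=
  if margX PXY a = 0 then margY PXY b else PXY (a, b) / margX PXY a

def Top {n : ℕ} (PXY : 𝒳 × 𝒴 → ℝ) (G : (Fin n → 𝒴) → ℝ) (x : Fin n → 𝒳) : ℝ :=
  ∑ y : Fin n → 𝒴, (∏ i, Kker PXY (x i) (y i)) * G y

lemma Kker_mul (hnn : ∀ p, 0 ≤ PXY p) (a : 𝒳) (b : 𝒴) :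
    margX PXY a * Kker PXY a b = PXY (a, b) := by
  unfold Kker
  by_cases h : margX PXY a = 0
  · rw [if_pos h, h, zero_mul]
    exact (PXY_zero_of_margX PXY hnn h b).symm
  · rw [if_neg h]
    field_simp

lemma Kker_sum (hsum : ∑ p : 𝒳 × 𝒴, PXY p = 1) (a : 𝒳) : ∑ b, Kker PXY a b = 1 := by
  unfold Kker
  by_cases h : margX PXY a = 0
  · simp only [if_pos h]
    exact sum_margY PXY hsum
  · simp only [if_neg h]
    rw [← Finset.sum_div]
    rw [show (∑ b, PXY (a, b)) = margX PXY a from rfl]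
    exact div_self h

lemma Kker_nonneg (hnn : ∀ p, 0 ≤ PXY p) (a : 𝒳) (b : 𝒴) : 0 ≤ Kker PXY a b := by
  unfold Kker
  by_cases h : margX PXY a = 0
  · rw [if_pos h]; exact margY_nonneg PXY hnn b
  · rw [if_neg h]
    exact div_nonneg (hnn _) (margX_nonneg PXY hnn a)

lemma slop_sum_eq (hnn : ∀ p, 0 ≤ PXY p) (v : 𝒴 → ℝ) :
    ∑ a, margX PXY a * (∑ b, Kker PXY a b * v b) ^ 2
      = ∑ p : 𝒳 × 𝒴, PXY p * ((∑ b, Kker PXY p.1 b * v b) * v p.2) := by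
  rw [Fintype.sum_prod_type]
  refine Finset.sum_congr rfl fun a _ => ?_
  calc margX PXY a * (∑ b, Kker PXY a b * v b) ^ 2
      = ∑ b, (margX PXY a * Kker PXY a b) * ((∑ b', Kker PXY a b' * v b') * v b) := by
        rw [sq]
        rw [Finset.mul_sum]
        rw [Finset.mul_sum]
        exact Finset.sum_congr rfl fun b _ => by ring
    _ = ∑ b, PXY (a, b) * ((∑ b', Kker PXY a b' * v b') * v b) :=
        Finset.sum_congr rfl fun b _ => by rw [Kker_mul PXY hnn]

lemma slop0 (hnn : ∀ p, 0 ≤ PXY p) (hsum : ∑ p : 𝒳 × 𝒴, PXY p = 1)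
    (ψ : ℝ) (hψ : IsLUB (corrSet PXY) ψ) (hψ0 : 0 ≤ ψ)
    (v : 𝒴 → ℝ) (hv : ∑ b, margY PXY b * v b = 0) :
    ∑ a, margX PXY a * (∑ b, Kker PXY a b * v b) ^ 2
      ≤ ψ ^ 2 * ∑ b, margY PXY b * v b ^ 2 := by
  set u : 𝒳 → ℝ := fun a => ∑ b, Kker PXY a b * v b with hu
  set L := ∑ a, margX PXY a * u a ^ 2 with hL
  set R := ∑ b, margY PXY b * v b ^ 2 with hR
  have hL0 : 0 ≤ L := Finset.sum_nonneg fun a _ =>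
    mul_nonneg (margX_nonneg PXY hnn a) (sq_nonneg _)
  have hR0 : 0 ≤ R := Finset.sum_nonneg fun b _ =>
    mul_nonneg (margY_nonneg PXY hnn b) (sq_nonneg _)
  have key : L = ∑ p : 𝒳 × 𝒴, PXY p * (u p.1 * v p.2) := slop_sum_eq PXY hnn v
  have hb := single_letter PXY hnn hsum ψ hψ hψ0 u v hv
  rw [← hL, ← hR, ← key] at hb
  have hLle : L ≤ ψ * Real.sqrt L * Real.sqrt R := le_trans (le_abs_self L) hb
  rcases eq_or_lt_of_le hL0 with heq | hpos
  · rw [← heq]; positivity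
  · have hsL : 0 < Real.sqrt L := Real.sqrt_pos.mpr hpos
    have h1 : Real.sqrt L * Real.sqrt L ≤ (ψ * Real.sqrt R) * Real.sqrt L := by
      rw [Real.mul_self_sqrt hL0]
      calc L ≤ ψ * Real.sqrt L * Real.sqrt R := hLle
        _ = (ψ * Real.sqrt R) * Real.sqrt L := by ring
    have h2 : Real.sqrt L ≤ ψ * Real.sqrt R := le_of_mul_le_mul_right h1 hsL
    calc L = Real.sqrt L * Real.sqrt L := (Real.mul_self_sqrt hL0).symm
      _ ≤ (ψ * Real.sqrt R) * (ψ * Real.sqrt R) :=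
          mul_le_mul h2 h2 hsL.le (by positivity)
      _ = ψ ^ 2 * (Real.sqrt R * Real.sqrt R) := by ring
      _ = ψ ^ 2 * R := by rw [Real.mul_self_sqrt hR0]

lemma slop1 (hnn : ∀ p, 0 ≤ PXY p) (v : 𝒴 → ℝ) :
    ∑ a, margX PXY a * (∑ b, Kker PXY a b * v b) ^ 2
      ≤ ∑ b, margY PXY b * v b ^ 2 := by
  set u : 𝒳 → ℝ := fun a => ∑ b, Kker PXY a b * v b with hu
  set L := ∑ a, margX PXY a * u a ^ 2 with hL
  set R := ∑ b, margY PXY b * v b ^ 2 with hR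
  have hL0 : 0 ≤ L := Finset.sum_nonneg fun a _ =>
    mul_nonneg (margX_nonneg PXY hnn a) (sq_nonneg _)
  have key : L = ∑ p : 𝒳 × 𝒴, PXY p * (u p.1 * v p.2) := slop_sum_eq PXY hnn v
  have hCS := Finset.sum_mul_sq_le_sq_mul_sq Finset.univ
    (fun p : 𝒳 × 𝒴 => Real.sqrt (PXY p) * u p.1) (fun p : 𝒳 × 𝒴 => Real.sqrt (PXY p) * v p.2)
  have e1 : ∑ p : 𝒳 × 𝒴, (Real.sqrt (PXY p) * u p.1) * (Real.sqrt (PXY p) * v p.2) = L := by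
    rw [key]
    refine Finset.sum_congr rfl fun p _ => ?_
    rw [show (Real.sqrt (PXY p) * u p.1) * (Real.sqrt (PXY p) * v p.2)
      = (Real.sqrt (PXY p) * Real.sqrt (PXY p)) * (u p.1 * v p.2) from by ring,
      Real.mul_self_sqrt (hnn p)]
  have e2 : ∑ p : 𝒳 × 𝒴, (Real.sqrt (PXY p) * u p.1) ^ 2 = L := by
    rw [hL, ← sum_fst PXY (fun a => u a ^ 2)]
    refine Finset.sum_congr rfl fun p _ => ?_
    rw [mul_pow, Real.sq_sqrt (hnn p)]
  have e3 : ∑ p : 𝒳 × 𝒴, (Real.sqrt (PXY p) * v p.2) ^ 2 = R := by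
    rw [hR, ← sum_snd PXY (fun b => v b ^ 2)]
    refine Finset.sum_congr rfl fun p _ => ?_
    rw [mul_pow, Real.sq_sqrt (hnn p)]
  rw [e1, e2, e3] at hCS
  rcases eq_or_lt_of_le hL0 with heq | hpos
  · rw [← heq]
    rw [← e3]
    exact Finset.sum_nonneg fun p _ => sq_nonneg _
  · have : L * L ≤ L * R := by nlinarith
    exact le_of_mul_le_mul_left this hpos

lemma EX_succ {α : Type*} [Fintype α] (p : α → ℝ) {n : ℕ} (g : (Fin (n+1) → α) → ℝ) :
    EX p g = ∑ a, p a * EX p (fun x => g (Fin.cons a x)) := by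
  unfold EX
  rw [← Equiv.sum_comp (Fin.consEquiv (fun _ : Fin (n+1) => α))
    (fun z => (∏ i, p (z i)) * g z)]
  rw [Fintype.sum_prod_type]
  refine Finset.sum_congr rfl fun a _ => ?_
  rw [Finset.mul_sum]
  refine Finset.sum_congr rfl fun x _ => ?_
  simp only [Fin.consEquiv_apply]
  rw [Fin.prod_univ_succ]
  simp [Fin.consEquiv, Fin.cons_zero, Fin.cons_succ, mul_assoc]

lemma Top_cons {n : ℕ} (G : (Fin (n+1) → 𝒴) → ℝ) (a : 𝒳) (x : Fin n → 𝒳) :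
    Top PXY G (Fin.cons a x)
      = ∑ b, Kker PXY a b * Top PXY (fun y => G (Fin.cons b y)) x := by
  have key : ∀ y : Fin (n+1) → 𝒴,
      (∏ i, Kker PXY ((Fin.cons a x : Fin (n+1) → 𝒳) i) (y i)) * G y
        = Kker PXY a (y 0) * ((∏ i : Fin n, Kker PXY (x i) (y i.succ)) * G y) := by
    intro y
    rw [Fin.prod_univ_succ]
    simp only [Fin.cons_zero, Fin.cons_succ]
    ring
  unfold Top
  rw [Finset.sum_congr rfl fun y _ => key y]
  rw [← Equiv.sum_comp (Fin.consEquiv (fun _ : Fin (n+1) => 𝒴))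
    (fun y => Kker PXY a (y 0) * ((∏ i : Fin n, Kker PXY (x i) (y i.succ)) * G y))]
  rw [Fintype.sum_prod_type]
  refine Finset.sum_congr rfl fun b _ => ?_
  rw [Finset.mul_sum]
  refine Finset.sum_congr rfl fun y _ => ?_
  simp [Fin.consEquiv, Fin.cons_zero, Fin.cons_succ]

lemma opcore (hnn : ∀ p, 0 ≤ PXY p) (hsum : ∑ p : 𝒳 × 𝒴, PXY p = 1)
    (ψ : ℝ) (hψ : IsLUB (corrSet PXY) ψ) (hψ0 : 0 ≤ ψ) [Nonempty 𝒴] :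
    ∀ (n : ℕ) (S : Finset (Fin n)) (G : (Fin n → 𝒴) → ℝ),
    (∀ k ∈ S, ∀ y : Fin n → 𝒴, ∑ b, margY PXY b * G (Function.update y k b) = 0) →
    EX (margX PXY) (fun x => (Top PXY G x) ^ 2)
      ≤ (ψ ^ S.card) ^ 2 * EX (margY PXY) (fun y => (G y) ^ 2) := by
  intro n
  induction n with
  | zero =>
    intro S G hG
    have hS : S = ∅ := Finset.eq_empty_of_isEmpty S
    subst hS
    simp only [Finset.card_empty, pow_zero, one_pow, one_mul]
    unfold EX Top
    simp
  | succ n ih =>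
    intro S G hG
    set S' : Finset (Fin n) := Finset.univ.filter (fun i => i.succ ∈ S) with hS'
    set Gb : 𝒴 → (Fin n → 𝒴) → ℝ := fun b y => G (Fin.cons b y) with hGb
    set v : 𝒴 → (Fin n → 𝒳) → ℝ := fun b => Top PXY (Gb b) with hv
    have hGb_mz : ∀ k ∈ S', ∀ (b : 𝒴) (y : Fin n → 𝒴),
        ∑ c, margY PXY c * Gb b (Function.update y k c) = 0 := by
      intro k hk b y
      have hkS : k.succ ∈ S := (Finset.mem_filter.mp hk).2
      have hkey := hG k.succ hkS (Fin.cons b y)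
      calc ∑ c, margY PXY c * Gb b (Function.update y k c)
          = ∑ c, margY PXY c * G (Function.update (Fin.cons b y) k.succ c) := by
            refine Finset.sum_congr rfl fun c _ => ?_
            rw [hGb]
            simp only []
            rw [Fin.cons_update]
        _ = 0 := hkey
    have ihb : ∀ b, EX (margX PXY) (fun x => (v b x) ^ 2)
        ≤ (ψ ^ S'.card) ^ 2 * EX (margY PXY) (fun y => (Gb b y) ^ 2) :=
      fun b => ih S' (Gb b) (fun k hk y => hGb_mz k hk b y)
    set c : ℝ := if (0 : Fin (n+1)) ∈ S then ψ ^ 2 else 1 with hc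
    have hc0 : 0 ≤ c := by
      rw [hc]; split
      · positivity
      · norm_num
    have hcard : c * (ψ ^ S'.card) ^ 2 = (ψ ^ S.card) ^ 2 := by
      have hmap : S'.map ⟨Fin.succ, Fin.succ_injective n⟩ = S.erase 0 := by
        ext j
        simp only [Finset.mem_map, Finset.mem_erase, hS', Finset.mem_filter,
          Finset.mem_univ, true_and, Function.Embedding.coeFn_mk]
        constructor
        · rintro ⟨i, hi, rfl⟩
          exact ⟨Fin.succ_ne_zero i, hi⟩
        · rintro ⟨hj0, hjS⟩
          exact ⟨(j.pred hj0), by rw [Fin.succ_pred]; exact hjS, Fin.succ_pred j hj0⟩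
      have hcard' : S'.card = (S.erase 0).card := by rw [← hmap, Finset.card_map]
      by_cases h0 : (0 : Fin (n+1)) ∈ S
      · rw [hc, if_pos h0, hcard', ← Finset.card_erase_add_one h0]
        ring
      · rw [hc, if_neg h0, hcard', Finset.erase_eq_of_notMem h0, one_mul]
    have hpoint : ∀ x : Fin n → 𝒳,
        ∑ a, margX PXY a * (∑ b, Kker PXY a b * v b x) ^ 2
          ≤ c * ∑ b, margY PXY b * (v b x) ^ 2 := by
      intro x
      by_cases h0 : (0 : Fin (n+1)) ∈ S
      · rw [hc, if_pos h0]
        apply slop0 PXY hnn hsum ψ hψ hψ0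
        have hGb0 : ∀ y : Fin n → 𝒴, ∑ b, margY PXY b * Gb b y = 0 := by
          intro y
          have := hG 0 h0 (Fin.cons (Classical.arbitrary 𝒴) y)
          calc ∑ b, margY PXY b * Gb b y
              = ∑ b, margY PXY b
                  * G (Function.update (Fin.cons (Classical.arbitrary 𝒴) y) 0 b) := by
                refine Finset.sum_congr rfl fun b _ => ?_
                rw [Fin.update_cons_zero]
            _ = 0 := this
        calc ∑ b, margY PXY b * v b x
            = ∑ b, ∑ y : Fin n → 𝒴,
                margY PXY b * ((∏ i, Kker PXY (x i) (y i)) * Gb b y) := by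
              refine Finset.sum_congr rfl fun b _ => ?_
              rw [hv]
              simp only [Top]
              rw [Finset.mul_sum]
          _ = ∑ y : Fin n → 𝒴, ∑ b,
                margY PXY b * ((∏ i, Kker PXY (x i) (y i)) * Gb b y) := Finset.sum_comm
          _ = ∑ y : Fin n → 𝒴, (∏ i, Kker PXY (x i) (y i))
                * ∑ b, margY PXY b * Gb b y := by
              refine Finset.sum_congr rfl fun y _ => ?_
              rw [Finset.mul_sum]
              exact Finset.sum_congr rfl fun b _ => by ring
          _ = 0 := by
              rw [Finset.sum_congr rfl fun y _ => by rw [hGb0 y, mul_zero]]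
              exact Finset.sum_const_zero
      · rw [hc, if_neg h0, one_mul]
        exact slop1 PXY hnn (fun b => v b x)
    calc EX (margX PXY) (fun x => (Top PXY G x) ^ 2)
        = ∑ a, margX PXY a * EX (margX PXY) (fun x => (Top PXY G (Fin.cons a x)) ^ 2) :=
          EX_succ (margX PXY) _
      _ = ∑ a, margX PXY a * ∑ x : Fin n → 𝒳, (∏ i, margX PXY (x i))
            * (∑ b, Kker PXY a b * v b x) ^ 2 := by
          refine Finset.sum_congr rfl fun a _ => ?_
          congr 1
          unfold EX
          refine Finset.sum_congr rfl fun x _ => ?_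
          have ht : Top PXY G (Fin.cons a x) = ∑ b, Kker PXY a b * v b x := by
            rw [Top_cons PXY G a x]
          simp only [ht]
      _ = ∑ x : Fin n → 𝒳, (∏ i, margX PXY (x i))
            * ∑ a, margX PXY a * (∑ b, Kker PXY a b * v b x) ^ 2 := by
          simp only [Finset.mul_sum]
          rw [Finset.sum_comm]
          exact Finset.sum_congr rfl fun x _ => Finset.sum_congr rfl fun a _ => by ring
      _ ≤ ∑ x : Fin n → 𝒳, (∏ i, margX PXY (x i))
            * (c * ∑ b, margY PXY b * (v b x) ^ 2) := by
          refine Finset.sum_le_sum fun x _ => ?_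
          exact mul_le_mul_of_nonneg_left (hpoint x)
            (Finset.prod_nonneg fun i _ => margX_nonneg PXY hnn (x i))
      _ = c * ∑ b, margY PXY b * EX (margX PXY) (fun x => (v b x) ^ 2) := by
          simp only [EX, Finset.mul_sum]
          rw [Finset.sum_comm]
          exact Finset.sum_congr rfl fun b _ => Finset.sum_congr rfl fun x _ => by ring
      _ ≤ c * ∑ b, margY PXY b * ((ψ ^ S'.card) ^ 2 * EX (margY PXY) (fun y => (Gb b y) ^ 2)) := by
          apply mul_le_mul_of_nonneg_left _ hc0
          exact Finset.sum_le_sum fun b _ =>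
            mul_le_mul_of_nonneg_left (ihb b) (margY_nonneg PXY hnn b)
      _ = (c * (ψ ^ S'.card) ^ 2) * ∑ b, margY PXY b * EX (margY PXY) (fun y => (Gb b y) ^ 2) := by
          rw [Finset.mul_sum, Finset.mul_sum]
          exact Finset.sum_congr rfl fun b _ => by ring
      _ = (ψ ^ S.card) ^ 2 * EX (margY PXY) (fun y => (G y) ^ 2) := by
          rw [hcard]
          congr 1
          rw [EX_succ (margY PXY) (fun y => (G y) ^ 2)]

lemma EJ_inner (hnn : ∀ p, 0 ≤ PXY p) {n : ℕ}
    (F : (Fin n → 𝒳) → ℝ) (G : (Fin n → 𝒴) → ℝ) :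
    EJ PXY (fun x y => F x * G y)
      = ∑ x : Fin n → 𝒳, (∏ i, margX PXY (x i)) * (F x * Top PXY G x) := by
  unfold EJ Top
  have e := Equiv.arrowProdEquivProdArrow (Fin n) (fun _ => 𝒳) (fun _ => 𝒴)
  rw [← Equiv.sum_comp (Equiv.arrowProdEquivProdArrow (Fin n) (fun _ => 𝒳) (fun _ => 𝒴)).symm
    (fun ω : Fin n → 𝒳 × 𝒴 => (∏ i, PXY (ω i))
      * (F (fun i => (ω i).1) * G (fun i => (ω i).2)))]
  rw [Fintype.sum_prod_type]
  refine Finset.sum_congr rfl fun x _ => ?_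
  rw [Finset.mul_sum, Finset.mul_sum]
  refine Finset.sum_congr rfl fun y _ => ?_
  simp only [Equiv.arrowProdEquivProdArrow, Equiv.coe_fn_symm_mk]
  have hprod : (∏ i, PXY (x i, y i))
      = ∏ i, margX PXY (x i) * Kker PXY (x i) (y i) :=
    Finset.prod_congr rfl fun i _ => (Kker_mul PXY hnn (x i) (y i)).symm
  rw [hprod, Finset.prod_mul_distrib]
  ring

lemma core (hnn : ∀ p, 0 ≤ PXY p) (hsum : ∑ p : 𝒳 × 𝒴, PXY p = 1)
    (ψ : ℝ) (hψ : IsLUB (corrSet PXY) ψ) (hψ0 : 0 ≤ ψ) [Nonempty 𝒴] {n : ℕ}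
    (S : Finset (Fin n)) (F : (Fin n → 𝒳) → ℝ) (G : (Fin n → 𝒴) → ℝ)
    (hG : ∀ k ∈ S, ∀ y : Fin n → 𝒴, ∑ b, margY PXY b * G (Function.update y k b) = 0) :
    |EJ PXY (fun x y => F x * G y)|
      ≤ ψ ^ S.card * Real.sqrt (EX (margX PXY) (fun x => F x ^ 2))
          * Real.sqrt (EX (margY PXY) (fun y => G y ^ 2)) := by
  set A := EX (margX PXY) (fun x => F x ^ 2) with hA
  set B := EX (margX PXY) (fun x => (Top PXY G x) ^ 2) with hB
  set C := EX (margY PXY) (fun y => G y ^ 2) with hC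
  have hw : ∀ x : Fin n → 𝒳, 0 ≤ ∏ i, margX PXY (x i) :=
    fun x => Finset.prod_nonneg fun i _ => margX_nonneg PXY hnn (x i)
  have hA0 : 0 ≤ A := Finset.sum_nonneg fun x _ => mul_nonneg (hw x) (sq_nonneg _)
  have hC0 : 0 ≤ C := Finset.sum_nonneg fun y _ =>
    mul_nonneg (Finset.prod_nonneg fun i _ => margY_nonneg PXY hnn (y i)) (sq_nonneg _)
  have h1 : (EJ PXY (fun x y => F x * G y)) ^ 2 ≤ A * B := by
    rw [EJ_inner PXY hnn F G]
    have hCS := Finset.sum_mul_sq_le_sq_mul_sq Finset.univ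
      (fun x : Fin n → 𝒳 => Real.sqrt (∏ i, margX PXY (x i)) * F x)
      (fun x : Fin n → 𝒳 => Real.sqrt (∏ i, margX PXY (x i)) * Top PXY G x)
    have e1 : ∑ x : Fin n → 𝒳, (Real.sqrt (∏ i, margX PXY (x i)) * F x)
        * (Real.sqrt (∏ i, margX PXY (x i)) * Top PXY G x)
        = ∑ x : Fin n → 𝒳, (∏ i, margX PXY (x i)) * (F x * Top PXY G x) := by
      refine Finset.sum_congr rfl fun x _ => ?_
      rw [show (Real.sqrt (∏ i, margX PXY (x i)) * F x)
        * (Real.sqrt (∏ i, margX PXY (x i)) * Top PXY G x)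
        = (Real.sqrt (∏ i, margX PXY (x i)) * Real.sqrt (∏ i, margX PXY (x i)))
          * (F x * Top PXY G x) from by ring, Real.mul_self_sqrt (hw x)]
    have e2 : ∑ x : Fin n → 𝒳, (Real.sqrt (∏ i, margX PXY (x i)) * F x) ^ 2 = A := by
      rw [hA]
      refine Finset.sum_congr rfl fun x _ => ?_
      rw [mul_pow, Real.sq_sqrt (hw x)]
    have e3 : ∑ x : Fin n → 𝒳, (Real.sqrt (∏ i, margX PXY (x i)) * Top PXY G x) ^ 2 = B := by
      rw [hB]
      refine Finset.sum_congr rfl fun x _ => ?_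
      rw [mul_pow, Real.sq_sqrt (hw x)]
    rw [e1, e2, e3] at hCS
    exact hCS
  have h2 : B ≤ (ψ ^ S.card) ^ 2 * C := opcore PXY hnn hsum ψ hψ hψ0 n S G hG
  have hRnn : 0 ≤ ψ ^ S.card * Real.sqrt A * Real.sqrt C := by positivity
  have hsq : (EJ PXY (fun x y => F x * G y)) ^ 2
      ≤ (ψ ^ S.card * Real.sqrt A * Real.sqrt C) ^ 2 := by
    have hexp : (ψ ^ S.card * Real.sqrt A * Real.sqrt C) ^ 2
        = A * ((ψ ^ S.card) ^ 2 * C) := by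
      rw [mul_pow, mul_pow, Real.sq_sqrt hA0, Real.sq_sqrt hC0]
      ring
    rw [hexp]
    calc (EJ PXY (fun x y => F x * G y)) ^ 2 ≤ A * B := h1
      _ ≤ A * ((ψ ^ S.card) ^ 2 * C) := mul_le_mul_of_nonneg_left h2 hA0
  calc |EJ PXY (fun x y => F x * G y)|
      = Real.sqrt ((EJ PXY (fun x y => F x * G y)) ^ 2) := (Real.sqrt_sq_eq_abs _).symm
    _ ≤ Real.sqrt ((ψ ^ S.card * Real.sqrt A * Real.sqrt C) ^ 2) := Real.sqrt_le_sqrt hsq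
    _ = ψ ^ S.card * Real.sqrt A * Real.sqrt C := Real.sqrt_sq hRnn

lemma EJ_expand {n : ℕ} (F : Finset (Fin n) → (Fin n → 𝒳) → ℝ)
    (G : Finset (Fin n) → (Fin n → 𝒴) → ℝ) :
    EJ PXY (fun x y => (∑ S : Finset (Fin n), F S x) * (∑ T : Finset (Fin n), G T y))
      = ∑ S : Finset (Fin n), ∑ T : Finset (Fin n),
          EJ PXY (fun x y => F S x * G T y) := by
  unfold EJ
  calc ∑ ω : Fin n → 𝒳 × 𝒴, (∏ i, PXY (ω i))
        * ((∑ S : Finset (Fin n), F S (fun i => (ω i).1))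
            * (∑ T : Finset (Fin n), G T (fun i => (ω i).2)))
      = ∑ ω : Fin n → 𝒳 × 𝒴, ∑ S : Finset (Fin n), ∑ T : Finset (Fin n),
          (∏ i, PXY (ω i)) * (F S (fun i => (ω i).1) * G T (fun i => (ω i).2)) := by
        refine Finset.sum_congr rfl fun ω _ => ?_
        rw [Finset.sum_mul_sum, Finset.mul_sum]
        refine Finset.sum_congr rfl fun S _ => ?_
        rw [Finset.mul_sum]
    _ = ∑ S : Finset (Fin n), ∑ ω : Fin n → 𝒳 × 𝒴, ∑ T : Finset (Fin n),
          (∏ i, PXY (ω i)) * (F S (fun i => (ω i).1) * G T (fun i => (ω i).2)) :=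
        Finset.sum_comm
    _ = ∑ S : Finset (Fin n), ∑ T : Finset (Fin n), ∑ ω : Fin n → 𝒳 × 𝒴,
          (∏ i, PXY (ω i)) * (F S (fun i => (ω i).1) * G T (fun i => (ω i).2)) :=
        Finset.sum_congr rfl fun S _ => Finset.sum_comm

lemma proj_update_fst {n : ℕ} (ω : Fin n → 𝒳 × 𝒴) (k : Fin n) (c : 𝒳 × 𝒴) :
    (fun i => (Function.update ω k c i).1) = Function.update (fun i => (ω i).1) k c.1 := by
  funext i
  rcases eq_or_ne i k with rfl | h
  · simp
  · simp [Function.update_of_ne h]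

lemma proj_update_snd {n : ℕ} (ω : Fin n → 𝒳 × 𝒴) (k : Fin n) (c : 𝒳 × 𝒴) :
    (fun i => (Function.update ω k c i).2) = Function.update (fun i => (ω i).2) k c.2 := by
  funext i
  rcases eq_or_ne i k with rfl | h
  · simp
  · simp [Function.update_of_ne h]

lemma EJ_orth (hsum : ∑ p : 𝒳 × 𝒴, PXY p = 1) {n : ℕ}
    (S T : Finset (Fin n)) (hST : S ≠ T)
    (F : (Fin n → 𝒳) → ℝ) (G : (Fin n → 𝒴) → ℝ)
    (hFdep : ∀ k ∉ S, ∀ (x : Fin n → 𝒳) (a : 𝒳), F (Function.update x k a) = F x)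
    (hFmz : ∀ k ∈ S, ∀ x : Fin n → 𝒳, ∑ a, margX PXY a * F (Function.update x k a) = 0)
    (hGdep : ∀ k ∉ T, ∀ (y : Fin n → 𝒴) (b : 𝒴), G (Function.update y k b) = G y)
    (hGmz : ∀ k ∈ T, ∀ y : Fin n → 𝒴, ∑ b, margY PXY b * G (Function.update y k b) = 0) :
    EJ PXY (fun x y => F x * G y) = 0 := by
  have hex : (∃ k, k ∈ S ∧ k ∉ T) ∨ (∃ k, k ∈ T ∧ k ∉ S) := by
    by_contra hcon
    push_neg at hcon
    exact hST (Finset.Subset.antisymm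
      (fun k hk => hcon.1 k hk) (fun k hk => hcon.2 k hk))
  unfold EJ
  rcases hex with ⟨k, hkS, hkT⟩ | ⟨k, hkT, hkS⟩
  · refine helperB0 PXY hsum k _ (fun ω => ?_)
    calc ∑ c : 𝒳 × 𝒴, PXY c * (F (fun i => (Function.update ω k c i).1)
            * G (fun i => (Function.update ω k c i).2))
        = ∑ c : 𝒳 × 𝒴, PXY c * (F (Function.update (fun i => (ω i).1) k c.1)
            * G (fun i => (ω i).2)) := by
          refine Finset.sum_congr rfl fun c _ => ?_
          rw [proj_update_fst, proj_update_snd, hGdep k hkT]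
      _ = (∑ c : 𝒳 × 𝒴, PXY c * F (Function.update (fun i => (ω i).1) k c.1))
            * G (fun i => (ω i).2) := by
          rw [Finset.sum_mul]
          exact Finset.sum_congr rfl fun c _ => by ring
      _ = (∑ a, margX PXY a * F (Function.update (fun i => (ω i).1) k a))
            * G (fun i => (ω i).2) := by
          rw [sum_fst PXY (fun a => F (Function.update (fun i => (ω i).1) k a))]
      _ = 0 := by rw [hFmz k hkS, zero_mul]
  · refine helperB0 PXY hsum k _ (fun ω => ?_)
    calc ∑ c : 𝒳 × 𝒴, PXY c * (F (fun i => (Function.update ω k c i).1)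
            * G (fun i => (Function.update ω k c i).2))
        = ∑ c : 𝒳 × 𝒴, PXY c * (F (fun i => (ω i).1)
            * G (Function.update (fun i => (ω i).2) k c.2)) := by
          refine Finset.sum_congr rfl fun c _ => ?_
          rw [proj_update_fst, proj_update_snd, hFdep k hkS]
      _ = (∑ c : 𝒳 × 𝒴, PXY c * G (Function.update (fun i => (ω i).2) k c.2))
            * F (fun i => (ω i).1) := by
          rw [Finset.sum_mul]
          exact Finset.sum_congr rfl fun c _ => by ring
      _ = (∑ b, margY PXY b * G (Function.update (fun i => (ω i).2) k b))
            * F (fun i => (ω i).1) := by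
          rw [sum_snd PXY (fun b => G (Function.update (fun i => (ω i).2) k b))]
      _ = 0 := by rw [hGmz k hkT, zero_mul]


end Joint

/-- the covariance between the outputs of two distributed
binary-block-encoders is bounded by the weighted correlation of their dependency
spectra: `|E[ẽ(Xⁿ)·f̃(Yⁿ)]| ≤ ∑_S ψ^{|S|}·√(P_S·Q_S)`. -/
theorem covariance_bounded_by_dependency_spectra
    {𝒳 𝒴 : Type*} [Fintype 𝒳] [Fintype 𝒴] [DecidableEq 𝒳] [DecidableEq 𝒴]
    {n : ℕ} (PXY : 𝒳 × 𝒴 → ℝ)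
    (hnn : ∀ p, 0 ≤ PXY p) (hsum : ∑ p : 𝒳 × 𝒴, PXY p = 1)
    (hX2 : ∃ x₁ x₂ : 𝒳, x₁ ≠ x₂ ∧ 0 < margX PXY x₁ ∧ 0 < margX PXY x₂)
    (hY2 : ∃ y₁ y₂ : 𝒴, y₁ ≠ y₂ ∧ 0 < margY PXY y₁ ∧ 0 < margY PXY y₂)
    (ψ : ℝ) (hψ : IsLUB (corrSet PXY) ψ)
    (e : (Fin n → 𝒳) → Bool) (f : (Fin n → 𝒴) → Bool)
    (P Q : Finset (Fin n) → ℝ)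
    (hP : ∀ S, P S = varX (margX PXY) (comp (margX PXY) (centered (margX PXY) e) S))
    (hQ : ∀ S, Q S = varX (margY PXY) (comp (margY PXY) (centered (margY PXY) f) S)) :
    |EJ PXY (fun x y => centered (margX PXY) e x * centered (margY PXY) f y)|
      ≤ ∑ S : Finset (Fin n), ψ ^ S.card * Real.sqrt (P S * Q S) := by
  haveI hNE : Nonempty 𝒴 := ⟨hY2.choose⟩
  have hψ0 : 0 ≤ ψ := psi_nonneg PXY hX2 hY2 ψ hψ
  have hpx1 : ∑ a, margX PXY a = 1 := sum_margX PXY hsum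
  have hpy1 : ∑ b, margY PXY b = 1 := sum_margY PXY hsum
  have hdecomp : EJ PXY (fun x y => centered (margX PXY) e x * centered (margY PXY) f y)
      = ∑ S : Finset (Fin n), ∑ T : Finset (Fin n), EJ PXY (fun x y =>
          comp (margX PXY) (centered (margX PXY) e) S x
            * comp (margY PXY) (centered (margY PXY) f) T y) := by
    rw [← EJ_expand PXY (fun S => comp (margX PXY) (centered (margX PXY) e) S)
      (fun T => comp (margY PXY) (centered (margY PXY) f) T)]
    unfold EJ
    refine Finset.sum_congr rfl fun ω _ => ?_
    congr 1
    show centered (margX PXY) e (fun i => (ω i).1) * centered (margY PXY) f (fun i => (ω i).2)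
      = (∑ S : Finset (Fin n), comp (margX PXY) (centered (margX PXY) e) S (fun i => (ω i).1))
        * ∑ T : Finset (Fin n), comp (margY PXY) (centered (margY PXY) f) T (fun i => (ω i).2)
    rw [sum_comp_univ (margX PXY) (centered (margX PXY) e) (fun i => (ω i).1),
      sum_comp_univ (margY PXY) (centered (margY PXY) f) (fun i => (ω i).2)]
  have hdiag : ∀ S : Finset (Fin n),
      ∑ T : Finset (Fin n), EJ PXY (fun x y =>
          comp (margX PXY) (centered (margX PXY) e) S x
            * comp (margY PXY) (centered (margY PXY) f) T y)
        = EJ PXY (fun x y =>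
          comp (margX PXY) (centered (margX PXY) e) S x
            * comp (margY PXY) (centered (margY PXY) f) S y) := by
    intro S
    refine Finset.sum_eq_single S ?_ ?_
    · intro T _ hTS
      refine EJ_orth PXY hsum S T (Ne.symm hTS) _ _ ?_ ?_ ?_ ?_
      · exact fun k hk x a => comp_update (margX PXY) (centered (margX PXY) e) S k hk x a
      · exact fun k hk x => comp_avg (margX PXY) hpx1 (centered (margX PXY) e) S k hk x
      · exact fun k hk y b => comp_update (margY PXY) (centered (margY PXY) f) T k hk y b
      · exact fun k hk y => comp_avg (margY PXY) hpy1 (centered (margY PXY) f) T k hk y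
    · intro h
      exact absurd (Finset.mem_univ S) h
  rw [hdecomp, Finset.sum_congr rfl (fun S _ => hdiag S)]
  calc |∑ S : Finset (Fin n), EJ PXY (fun x y =>
          comp (margX PXY) (centered (margX PXY) e) S x
            * comp (margY PXY) (centered (margY PXY) f) S y)|
      ≤ ∑ S : Finset (Fin n), |EJ PXY (fun x y =>
          comp (margX PXY) (centered (margX PXY) e) S x
            * comp (margY PXY) (centered (margY PXY) f) S y)| :=
        Finset.abs_sum_le_sum_abs _ _
    _ ≤ ∑ S : Finset (Fin n), ψ ^ S.card * Real.sqrt (P S * Q S) := by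
        refine Finset.sum_le_sum fun S _ => ?_
        have hPS : P S = EX (margX PXY)
            (fun x => (comp (margX PXY) (centered (margX PXY) e) S x) ^ 2) := by
          rw [hP S]
          exact varX_comp (margX PXY) hpx1 _ (EX_centered (margX PXY) hpx1 e) S
        have hQS : Q S = EX (margY PXY)
            (fun y => (comp (margY PXY) (centered (margY PXY) f) S y) ^ 2) := by
          rw [hQ S]
          exact varX_comp (margY PXY) hpy1 _ (EX_centered (margY PXY) hpy1 f) S
        have hPS0 : 0 ≤ P S := by
          rw [hPS]
          exact Finset.sum_nonneg fun x _ => mul_nonneg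
            (Finset.prod_nonneg fun i _ => margX_nonneg PXY hnn (x i)) (sq_nonneg _)
        rw [hPS, hQS, Real.sqrt_mul (hPS.symm ▸ hPS0), ← mul_assoc]
        exact core PXY hnn hsum ψ hψ hψ0 S _ _
          (fun k hk y => comp_avg (margY PXY) hpy1 (centered (margY PXY) f) S k hk y)


end BBE
end
end

section
/- Key entropy inequality (equation (A2) in the proof of Theorem 1): let N be a random variable with values in a finite set, let X and D be random k-bit vectors such that the k components of D are i.i.d. Bernoulli(δ) for some δ ∈ [0,1], and such that D is independent of the pair (X, N). Then H(N | X ⊕ D) ≥ H(N) − k·(1 − h_b(δ)). -/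
open Finset

noncomputable section

attribute [local instance] Classical.propDecidable

namespace FinIT

/-- A probability mass function on a finite sample space `Ω`. -/
structure FinProb (Ω : Type*) [Fintype Ω] where
  μ : Ω → ℝ
  nonneg : ∀ ω, 0 ≤ μ ω
  sum_one : ∑ ω, μ ω = 1

variable {Ω : Type*} [Fintype Ω]

/-- Probability of an event. -/
def FinProb.prob (P : FinProb Ω) (p : Ω → Prop) : ℝ :=
  ∑ ω, if p ω then P.μ ω else 0

/-- Shannon entropy (in bits) of a random variable `X` on `(Ω, P)`. -/
def entH (P : FinProb Ω) {S : Type*} [Fintype S] (X : Ω → S) : ℝ :=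
  ∑ s : S, -(P.prob (fun ω => X ω = s) * Real.logb 2 (P.prob (fun ω => X ω = s)))

/-- Conditional Shannon entropy `H(X|Y) = H(X,Y) - H(Y)` (in bits). -/
def condH (P : FinProb Ω) {S T : Type*} [Fintype S] [Fintype T]
    (X : Ω → S) (Y : Ω → T) : ℝ :=
  entH P (fun ω => (X ω, Y ω)) - entH P Y

/-- Conditional mutual information `I(X;Y|Z) = H(X|Z) + H(Y|Z) - H(X,Y|Z)` (in bits). -/
def cmi (P : FinProb Ω) {S T U : Type*} [Fintype S] [Fintype T] [Fintype U]
    (X : Ω → S) (Y : Ω → T) (Z : Ω → U) : ℝ :=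
  condH P X Z + condH P Y Z - condH P (fun ω => (X ω, Y ω)) Z

/-- The binary entropy function (in bits). -/
def hb (x : ℝ) : ℝ := -(x * Real.logb 2 x) - (1 - x) * Real.logb 2 (1 - x)

/-- The binary convolution `p ∗ q = p(1-q) + q(1-p)`. -/
def conv (p q : ℝ) : ℝ := p * (1 - q) + q * (1 - p)

/-- Independence of two random variables. -/
def Indep2 (P : FinProb Ω) {S T : Type*} (X : Ω → S) (Y : Ω → T) : Prop :=
  ∀ s t, P.prob (fun ω => X ω = s ∧ Y ω = t)
    = P.prob (fun ω => X ω = s) * P.prob (fun ω => Y ω = t)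

/-- Mutual independence of three random variables. -/
def Indep3 (P : FinProb Ω) {S T U : Type*} (X : Ω → S) (Y : Ω → T) (Z : Ω → U) : Prop :=
  ∀ s t u, P.prob (fun ω => X ω = s ∧ Y ω = t ∧ Z ω = u)
    = P.prob (fun ω => X ω = s) * P.prob (fun ω => Y ω = t) * P.prob (fun ω => Z ω = u)

/-- Mutual independence of four random variables. -/
def Indep4 (P : FinProb Ω) {S T U V : Type*}
    (X : Ω → S) (Y : Ω → T) (Z : Ω → U) (W : Ω → V) : Prop :=
  ∀ s t u v, P.prob (fun ω => X ω = s ∧ Y ω = t ∧ Z ω = u ∧ W ω = v)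
    = P.prob (fun ω => X ω = s) * P.prob (fun ω => Y ω = t) *
        P.prob (fun ω => Z ω = u) * P.prob (fun ω => W ω = v)

/-- The components of `D` are i.i.d. Bernoulli(δ). -/
def IIDBern (P : FinProb Ω) {k : ℕ} (D : Ω → Fin k → ZMod 2) (δ : ℝ) : Prop :=
  ∀ v : Fin k → ZMod 2,
    P.prob (fun ω => D ω = v) = ∏ i, (if v i = 1 then δ else 1 - δ)


-- basic lemmas
lemma prob_nonneg (P : FinProb Ω) (p : Ω → Prop) : 0 ≤ P.prob p := by
  apply Finset.sum_nonneg; intro ω _; split <;> simp [P.nonneg ω]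

lemma prob_congr (P : FinProb Ω) {p q : Ω → Prop} (h : ∀ ω, p ω ↔ q ω) :
    P.prob p = P.prob q := by
  unfold FinProb.prob; apply Finset.sum_congr rfl; intro ω _; simp [h ω]

lemma sum_prob_cond (P : FinProb Ω) {T : Type*} [Fintype T] (Q : Ω → Prop) (Y : Ω → T) :
    ∑ t, P.prob (fun ω => Q ω ∧ Y ω = t) = P.prob Q := by
  unfold FinProb.prob
  rw [Finset.sum_comm]
  apply Finset.sum_congr rfl; intro ω _
  by_cases hq : Q ω <;> simp [hq, Finset.sum_ite_eq]

lemma sum_prob_eq_one (P : FinProb Ω) {T : Type*} [Fintype T] (Y : Ω → T) :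
    ∑ t, P.prob (fun ω => Y ω = t) = 1 := by
  have := sum_prob_cond P (fun _ => True) Y
  simp only [true_and] at this
  rw [this]
  unfold FinProb.prob
  simp [P.sum_one]

lemma prob_fiber (P : FinProb Ω) {U V : Type*} [Fintype U] (Q : Ω → Prop)
    (W : Ω → U) (f : U → V) (z : V) :
    ∑ w ∈ univ.filter (fun w => f w = z), P.prob (fun ω => Q ω ∧ W ω = w)
      = P.prob (fun ω => Q ω ∧ f (W ω) = z) := by
  unfold FinProb.prob
  rw [Finset.sum_comm]
  apply Finset.sum_congr rfl; intro ω _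
  rw [Finset.sum_filter]
  by_cases hq : Q ω
  · by_cases hz : f (W ω) = z
    · rw [Finset.sum_eq_single (W ω)]
      · simp [hq, hz]
      · intro w _ hw; simp [hq, Ne.symm hw, fun h : W ω = w => hw h.symm]
      · simp
    · rw [Finset.sum_eq_zero]
      · simp [hq, hz]
      · intro w _; by_cases h : W ω = w <;> simp [h, hq] <;> intro h' <;> exact absurd (h ▸ h') hz
  · simp [hq]

lemma prob_pair (P : FinProb Ω) {S T : Type*} (X : Ω → S) (Y : Ω → T) (s : S) (t : T) :
    P.prob (fun ω => (X ω, Y ω) = (s, t)) = P.prob (fun ω => X ω = s ∧ Y ω = t) := by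
  apply prob_congr; intro ω; simp [Prod.ext_iff]


-- Gibbs' inequality
lemma gibbs {ι : Type*} [Fintype ι] (p q : ι → ℝ)
    (hp : ∀ i, 0 ≤ p i) (hpq : ∀ i, 0 < p i → 0 < q i)
    (hq0 : ∀ i, 0 ≤ q i)
    (hq1 : ∑ i, q i ≤ 1) (hp1 : ∑ i, p i = 1) :
    ∑ i, p i * Real.logb 2 (q i) ≤ ∑ i, p i * Real.logb 2 (p i) := by
  have key : ∀ i, p i * Real.log (q i) - p i * Real.log (p i) ≤ q i - p i := by
    intro i
    rcases eq_or_lt_of_le (hp i) with h | h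
    · simp [← h, hq0 i]
    · have hqi := hpq i h
      have hlog := Real.log_le_sub_one_of_pos (div_pos hqi h)
      rw [Real.log_div (ne_of_gt hqi) (ne_of_gt h)] at hlog
      have := mul_le_mul_of_nonneg_left hlog (le_of_lt h)
      rw [mul_sub] at this
      have hd : p i * (q i / p i - 1) = q i - p i := by field_simp
      nlinarith [this]
  have hsum : ∑ i, (p i * Real.log (q i) - p i * Real.log (p i)) ≤ 0 := by
    calc ∑ i, (p i * Real.log (q i) - p i * Real.log (p i))
        ≤ ∑ i, (q i - p i) := Finset.sum_le_sum (fun i _ => key i)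
      _ = (∑ i, q i) - (∑ i, p i) := by rw [Finset.sum_sub_distrib]
      _ ≤ 0 := by rw [hp1]; linarith
  have hlog2 : (0:ℝ) < Real.log 2 := Real.log_pos (by norm_num)
  have expand : ∀ (f : ι → ℝ), ∑ i, p i * Real.logb 2 (f i)
      = (∑ i, (p i * Real.log (f i))) / Real.log 2 := by
    intro f
    rw [Finset.sum_div]
    apply Finset.sum_congr rfl; intro i _
    rw [Real.logb, div_eq_mul_inv, div_eq_mul_inv]; ring
  rw [expand p, expand q, div_le_div_iff_of_pos_right hlog2]
  rw [Finset.sum_sub_distrib] at hsum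
  linarith

-- entropy under an equivalence of the value space
lemma entH_comp_equiv (P : FinProb Ω) {S T : Type*} [Fintype S] [Fintype T]
    (Z : Ω → S) (e : S ≃ T) :
    entH P (fun ω => e (Z ω)) = entH P Z := by
  unfold entH
  rw [← Equiv.sum_comp e]
  apply Finset.sum_congr rfl; intro s _
  have : (P.prob fun ω => e (Z ω) = e s) = (P.prob fun ω => Z ω = s) := by
    apply prob_congr; intro ω; simp
  simp only [this]

-- entropy is at most log of the cardinality
lemma entH_le_logb_card (P : FinProb Ω) {S : Type*} [Fintype S] (X : Ω → S) :
    entH P X ≤ Real.logb 2 (Fintype.card S) := by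
  have hp1 := sum_prob_eq_one P X
  have hS : Nonempty S := by
    by_contra h
    rw [not_nonempty_iff] at h
    rw [Finset.sum_of_isEmpty] at hp1
    norm_num at hp1
  have hcard : (0:ℝ) < Fintype.card S := by
    have := Fintype.card_pos_iff.mpr hS
    exact_mod_cast this
  have := gibbs (fun s => P.prob (fun ω => X ω = s)) (fun _ => (Fintype.card S : ℝ)⁻¹)
    (fun s => prob_nonneg P _) (fun s _ => by positivity) (fun s => by positivity)
    (by rw [Finset.sum_const, nsmul_eq_mul, Finset.card_univ, mul_inv_cancel₀ (ne_of_gt hcard)]) hp1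
  unfold entH
  have h2 : ∑ s, P.prob (fun ω => X ω = s) * Real.logb 2 (Fintype.card S : ℝ)⁻¹
      = -Real.logb 2 (Fintype.card S) := by
    rw [← Finset.sum_mul, hp1, one_mul, Real.logb_inv]
  rw [Finset.sum_neg_distrib]
  linarith

lemma prob_fiber' (P : FinProb Ω) {U V : Type*} [Fintype U]
    (W : Ω → U) (f : U → V) (z : V) :
    ∑ w ∈ univ.filter (fun w => f w = z), P.prob (fun ω => W ω = w)
      = P.prob (fun ω => f (W ω) = z) := by
  have h := prob_fiber P (fun _ => True) W f z
  have h1 : ∀ w : U, P.prob (fun ω => True ∧ W ω = w) = P.prob (fun ω => W ω = w) :=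
    fun w => prob_congr P (by simp)
  have h2 : P.prob (fun ω => True ∧ f (W ω) = z) = P.prob (fun ω => f (W ω) = z) :=
    prob_congr P (by simp)
  rw [← h2, ← h]
  exact Finset.sum_congr rfl (fun w _ => (h1 w).symm)

lemma sum_prod_eq {α β : Type*} [Fintype α] [Fintype β] (F : α → β → ℝ) :
    ∑ x : α × β, F x.1 x.2 = ∑ a, ∑ b, F a b := by
  rw [Fintype.sum_prod_type]

lemma condH_comp_le (P : FinProb Ω) {T' U V : Type*} [Fintype T'] [Fintype U] [Fintype V]
    (Y : Ω → T') (W : Ω → U) (f : U → V) :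
    condH P Y W ≤ condH P Y (fun ω => f (W ω)) := by
  set pYW : T' → U → ℝ := fun y w => P.prob (fun ω => Y ω = y ∧ W ω = w) with hpYWdef
  set pW : U → ℝ := fun w => P.prob (fun ω => W ω = w) with hpWdef
  set pYZ : T' → V → ℝ := fun y z => P.prob (fun ω => Y ω = y ∧ f (W ω) = z) with hpYZdef
  set pZ : V → ℝ := fun z => P.prob (fun ω => f (W ω) = z) with hpZdef
  -- marginal identities
  have hfibZ : ∀ z, ∑ w ∈ univ.filter (fun w => f w = z), pW w = pZ z :=
    fun z => prob_fiber' P W f z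
  have hfibYZ : ∀ y z, ∑ w ∈ univ.filter (fun w => f w = z), pYW y w = pYZ y z :=
    fun y z => prob_fiber P (fun ω => Y ω = y) W f z
  have hmargW : ∀ w, ∑ y, pYW y w = pW w := by
    intro w
    have : ∀ y, pYW y w = P.prob (fun ω => W ω = w ∧ Y ω = y) :=
      fun y => prob_congr P (fun ω => and_comm)
    simp only [this]
    exact sum_prob_cond P (fun ω => W ω = w) Y
  have hmargZ : ∀ z, ∑ y, pYZ y z = pZ z := by
    intro z
    have : ∀ y, pYZ y z = P.prob (fun ω => f (W ω) = z ∧ Y ω = y) :=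
      fun y => prob_congr P (fun ω => and_comm)
    simp only [this]
    exact sum_prob_cond P (fun ω => f (W ω) = z) Y
  have hpYWnn : ∀ y w, 0 ≤ pYW y w := fun y w => prob_nonneg P _
  have hpWnn : ∀ w, 0 ≤ pW w := fun w => prob_nonneg P _
  have hpYZnn : ∀ y z, 0 ≤ pYZ y z := fun y z => prob_nonneg P _
  have hpZnn : ∀ z, 0 ≤ pZ z := fun z => prob_nonneg P _
  -- pointwise domination
  have hle1 : ∀ y w, pYW y w ≤ pW w := by
    intro y w
    rw [← hmargW w]
    exact Finset.single_le_sum (fun y' _ => hpYWnn y' w) (Finset.mem_univ y)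
  have hle2 : ∀ y w, pYW y w ≤ pYZ y (f w) := by
    intro y w
    rw [← hfibYZ y (f w)]
    exact Finset.single_le_sum (fun w' _ => hpYWnn y w')
      (by simp)
  have hle3 : ∀ w, pW w ≤ pZ (f w) := by
    intro w
    rw [← hfibZ (f w)]
    exact Finset.single_le_sum (fun w' _ => hpWnn w') (by simp)
  -- the comparison distribution
  set q : T' → U → ℝ := fun y w =>
    if pZ (f w) = 0 then 0 else pW w * pYZ y (f w) / pZ (f w) with hqdef
  have hq0 : ∀ y w, 0 ≤ q y w := by
    intro y w
    rw [hqdef]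
    dsimp only
    split
    · exact le_refl 0
    · exact div_nonneg (mul_nonneg (hpWnn w) (hpYZnn y (f w))) (hpZnn (f w))
  have hqpos : ∀ y w, 0 < pYW y w → 0 < q y w := by
    intro y w h
    have h1 : 0 < pW w := lt_of_lt_of_le h (hle1 y w)
    have h2 : 0 < pYZ y (f w) := lt_of_lt_of_le h (hle2 y w)
    have h3 : 0 < pZ (f w) := lt_of_lt_of_le h1 (hle3 w)
    rw [hqdef]
    dsimp only
    rw [if_neg (ne_of_gt h3)]
    positivity
  -- sum of q is ≤ 1
  have hqrow : ∀ w, ∑ y, q y w ≤ pW w := by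
    intro w
    by_cases h : pZ (f w) = 0
    · simp only [hqdef, h, if_pos]
      simp [hpWnn w]
    · have : ∀ y, q y w = (pW w / pZ (f w)) * pYZ y (f w) := by
        intro y; rw [hqdef]; dsimp only; rw [if_neg h]; ring
      simp only [this]
      rw [← Finset.mul_sum, hmargZ (f w), div_mul_cancel₀ _ h]
  have hq1 : ∑ yw : T' × U, q yw.1 yw.2 ≤ 1 := by
    rw [sum_prod_eq, Finset.sum_comm]
    calc ∑ w, ∑ y, q y w ≤ ∑ w, pW w := Finset.sum_le_sum (fun w _ => hqrow w)
      _ = 1 := sum_prob_eq_one P W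
  have hpairYW : ∀ yw : T' × U, P.prob (fun ω => (Y ω, W ω) = yw) = pYW yw.1 yw.2 := by
    intro yw; rw [hpYWdef]; apply prob_congr; intro ω; simp [Prod.ext_iff]
  have hpairYZ : ∀ yz : T' × V, P.prob (fun ω => (Y ω, f (W ω)) = yz) = pYZ yz.1 yz.2 := by
    intro yz; rw [hpYZdef]; apply prob_congr; intro ω; simp [Prod.ext_iff]
  have hp1 : ∑ yw : T' × U, pYW yw.1 yw.2 = 1 := by
    have h := sum_prob_eq_one P (fun ω => (Y ω, W ω))
    rw [← h]
    exact Finset.sum_congr rfl (fun yw _ => (hpairYW yw).symm)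
  have hgibbs := gibbs (fun yw : T' × U => pYW yw.1 yw.2) (fun yw => q yw.1 yw.2)
    (fun yw => hpYWnn _ _) (fun yw h => hqpos _ _ h) (fun yw => hq0 _ _) hq1 hp1
  -- expand log q
  have hlogq : ∀ yw : T' × U, pYW yw.1 yw.2 * Real.logb 2 (q yw.1 yw.2)
      = pYW yw.1 yw.2 * Real.logb 2 (pW yw.2)
        + pYW yw.1 yw.2 * Real.logb 2 (pYZ yw.1 (f yw.2))
        - pYW yw.1 yw.2 * Real.logb 2 (pZ (f yw.2)) := by
    rintro ⟨y, w⟩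
    rcases eq_or_lt_of_le (hpYWnn y w) with h | h
    · rw [← h]; ring
    · have h1 : 0 < pW w := lt_of_lt_of_le h (hle1 y w)
      have h2 : 0 < pYZ y (f w) := lt_of_lt_of_le h (hle2 y w)
      have h3 : 0 < pZ (f w) := lt_of_lt_of_le h1 (hle3 w)
      have : q y w = pW w * pYZ y (f w) / pZ (f w) := by
        rw [hqdef]; dsimp only; rw [if_neg (ne_of_gt h3)]
      rw [this, Real.logb_div (by positivity) (ne_of_gt h3),
        Real.logb_mul (ne_of_gt h1) (ne_of_gt h2)]
      ring
  -- the three partial sums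
  have S1 : ∑ yw : T' × U, pYW yw.1 yw.2 * Real.logb 2 (pW yw.2)
      = ∑ w, pW w * Real.logb 2 (pW w) := by
    rw [sum_prod_eq (fun y w => pYW y w * Real.logb 2 (pW w)), Finset.sum_comm]
    apply Finset.sum_congr rfl; intro w _
    rw [← Finset.sum_mul, hmargW w]
  have S3 : ∑ yw : T' × U, pYW yw.1 yw.2 * Real.logb 2 (pZ (f yw.2))
      = ∑ z, pZ z * Real.logb 2 (pZ z) := by
    rw [sum_prod_eq (fun y w => pYW y w * Real.logb 2 (pZ (f w))), Finset.sum_comm]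
    have step1 : ∀ w, ∑ y, pYW y w * Real.logb 2 (pZ (f w))
        = pW w * Real.logb 2 (pZ (f w)) := by
      intro w; rw [← Finset.sum_mul, hmargW w]
    simp only [step1]
    rw [← Finset.sum_fiberwise univ f (fun w => pW w * Real.logb 2 (pZ (f w)))]
    apply Finset.sum_congr rfl; intro z _
    have : ∀ w ∈ univ.filter (fun w => f w = z),
        pW w * Real.logb 2 (pZ (f w)) = pW w * Real.logb 2 (pZ z) := by
      intro w hw
      rw [Finset.mem_filter] at hw
      rw [hw.2]
    rw [Finset.sum_congr rfl this, ← Finset.sum_mul, hfibZ z]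
  have S2 : ∑ yw : T' × U, pYW yw.1 yw.2 * Real.logb 2 (pYZ yw.1 (f yw.2))
      = ∑ yz : T' × V, pYZ yz.1 yz.2 * Real.logb 2 (pYZ yz.1 yz.2) := by
    rw [sum_prod_eq (fun y w => pYW y w * Real.logb 2 (pYZ y (f w))),
      sum_prod_eq (fun y z => pYZ y z * Real.logb 2 (pYZ y z))]
    apply Finset.sum_congr rfl; intro y _
    rw [← Finset.sum_fiberwise univ f (fun w => pYW y w * Real.logb 2 (pYZ y (f w)))]
    apply Finset.sum_congr rfl; intro z _
    have : ∀ w ∈ univ.filter (fun w => f w = z),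
        pYW y w * Real.logb 2 (pYZ y (f w)) = pYW y w * Real.logb 2 (pYZ y z) := by
      intro w hw
      rw [Finset.mem_filter] at hw
      rw [hw.2]
    rw [Finset.sum_congr rfl this, ← Finset.sum_mul, hfibYZ y z]
  -- identify the entropies
  have hHYW : entH P (fun ω => (Y ω, W ω)) = -∑ yw : T' × U, pYW yw.1 yw.2 * Real.logb 2 (pYW yw.1 yw.2) := by
    unfold entH
    rw [← Finset.sum_neg_distrib]
    apply Finset.sum_congr rfl; intro yw _
    rw [hpairYW yw]
  have hHYZ : entH P (fun ω => (Y ω, f (W ω))) = -∑ yz : T' × V, pYZ yz.1 yz.2 * Real.logb 2 (pYZ yz.1 yz.2) := by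
    unfold entH
    rw [← Finset.sum_neg_distrib]
    apply Finset.sum_congr rfl; intro yz _
    rw [hpairYZ yz]
  have hHW : entH P W = -∑ w, pW w * Real.logb 2 (pW w) := by
    unfold entH; rw [← Finset.sum_neg_distrib]
  have hHZ : entH P (fun ω => f (W ω)) = -∑ z, pZ z * Real.logb 2 (pZ z) := by
    unfold entH; rw [← Finset.sum_neg_distrib]
  -- put it together
  rw [Finset.sum_congr rfl (fun yw _ => hlogq yw)] at hgibbs
  rw [Finset.sum_sub_distrib, Finset.sum_add_distrib, S1, S2, S3] at hgibbs
  unfold condH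
  rw [hHYW, hHYZ, hHW, hHZ]
  linarith

lemma entH_pair_of_indep (P : FinProb Ω) {S T : Type*} [Fintype S] [Fintype T]
    (X : Ω → S) (Y : Ω → T) (h : Indep2 P X Y) :
    entH P (fun ω => (X ω, Y ω)) = entH P X + entH P Y := by
  set a : S → ℝ := fun s => P.prob (fun ω => X ω = s) with hadef
  set b : T → ℝ := fun t => P.prob (fun ω => Y ω = t) with hbdef
  have key : ∀ x y : ℝ, 0 ≤ x → 0 ≤ y →
      -(x * y * Real.logb 2 (x * y)) = y * -(x * Real.logb 2 x) + x * -(y * Real.logb 2 y) := by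
    intro x y hx hy
    rcases eq_or_lt_of_le hx with h | h
    · rw [← h]; ring
    · rcases eq_or_lt_of_le hy with h' | h'
      · rw [← h']; ring
      · rw [Real.logb_mul (ne_of_gt h) (ne_of_gt h')]; ring
  have hpt : ∀ st : S × T, -(P.prob (fun ω => (X ω, Y ω) = st)
        * Real.logb 2 (P.prob (fun ω => (X ω, Y ω) = st)))
      = b st.2 * -(a st.1 * Real.logb 2 (a st.1)) + a st.1 * -(b st.2 * Real.logb 2 (b st.2)) := by
    rintro ⟨s, t⟩
    rw [show (fun ω => (X ω, Y ω) = (s, t)) = (fun ω => (X ω, Y ω) = ((s,t).1, (s,t).2)) by rfl,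
      prob_pair P X Y s t, h s t]
    exact key _ _ (prob_nonneg P _) (prob_nonneg P _)
  unfold entH
  rw [Finset.sum_congr rfl (fun st _ => hpt st),
    sum_prod_eq (fun s t => b t * -(a s * Real.logb 2 (a s)) + a s * -(b t * Real.logb 2 (b t)))]
  have expand : ∀ s : S, ∑ t, (b t * -(a s * Real.logb 2 (a s)) + a s * -(b t * Real.logb 2 (b t)))
      = -(a s * Real.logb 2 (a s)) + a s * ∑ t, -(b t * Real.logb 2 (b t)) := by
    intro s
    rw [Finset.sum_add_distrib, ← Finset.sum_mul, sum_prob_eq_one P Y, one_mul, ← Finset.mul_sum]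
  rw [Finset.sum_congr rfl (fun s _ => expand s), Finset.sum_add_distrib,
    ← Finset.sum_mul, sum_prob_eq_one P X, one_mul]

lemma zmod2_sum (g : ZMod 2 → ℝ) : ∑ x, g x = g 0 + g 1 := Fin.sum_univ_two g

lemma entH_iid_bern (P : FinProb Ω) {k : ℕ} (D : Ω → Fin k → ZMod 2) {δ : ℝ}
    (hD : IIDBern P D δ) : entH P D = k * hb δ := by
  set r : ZMod 2 → ℝ := fun x => if x = 1 then δ else 1 - δ with hrdef
  have hsum_r : ∑ x, r x = 1 := by
    rw [zmod2_sum]; simp [hrdef]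
  have hHb : ∑ x, -(r x * Real.logb 2 (r x)) = hb δ := by
    rw [zmod2_sum]; simp only [hrdef]
    norm_num [hb]
    ring
  have hv : ∀ v : Fin k → ZMod 2,
      -(P.prob (fun ω => D ω = v) * Real.logb 2 (P.prob (fun ω => D ω = v)))
      = ∑ i, -(Real.logb 2 (r (v i)) * ∏ j, r (v j)) := by
    intro v
    rw [hD v]
    by_cases hz : ∀ i, r (v i) ≠ 0
    · rw [Real.logb_prod univ _ (fun i _ => hz i), Finset.mul_sum, neg_eq_iff_eq_neg,
        ← Finset.sum_neg_distrib]
      apply Finset.sum_congr rfl; intro i _; ring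
    · push_neg at hz
      obtain ⟨i, hi⟩ := hz
      have hp0 : ∏ j, r (v j) = 0 := Finset.prod_eq_zero (Finset.mem_univ i) hi
      rw [hp0]
      simp
  have hfix : ∀ i : Fin k, ∑ v : Fin k → ZMod 2, -(Real.logb 2 (r (v i)) * ∏ j, r (v j))
      = hb δ := by
    intro i
    set f : Fin k → ZMod 2 → ℝ := fun j x => if j = i then -(r x * Real.logb 2 (r x)) else r x
      with hfdef
    have hprod : ∀ v : Fin k → ZMod 2,
        -(Real.logb 2 (r (v i)) * ∏ j, r (v j)) = ∏ j, f j (v j) := by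
      intro v
      rw [← Finset.mul_prod_erase univ (fun j => f j (v j)) (Finset.mem_univ i),
        ← Finset.mul_prod_erase univ (fun j => r (v j)) (Finset.mem_univ i)]
      have h1 : f i (v i) = -(r (v i) * Real.logb 2 (r (v i))) := by simp [hfdef]
      have h2 : ∏ j ∈ univ.erase i, f j (v j) = ∏ j ∈ univ.erase i, r (v j) := by
        apply Finset.prod_congr rfl; intro j hj
        simp [hfdef, (Finset.mem_erase.mp hj).1]
      rw [h1, h2]; ring
    rw [Finset.sum_congr rfl (fun v _ => hprod v), ← Fintype.prod_sum f]
    have hcol : ∀ j : Fin k, ∑ x, f j x = if j = i then hb δ else 1 := by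
      intro j
      by_cases hj : j = i
      · rw [if_pos hj, ← hHb]
        apply Finset.sum_congr rfl; intro x _
        simp [hfdef, hj]
      · rw [if_neg hj, ← hsum_r]
        apply Finset.sum_congr rfl; intro x _
        simp [hfdef, hj]
    rw [Finset.prod_congr rfl (fun j _ => hcol j), Finset.prod_ite_eq' univ i (fun _ => hb δ)]
    simp
  unfold entH
  rw [Finset.sum_congr rfl (fun v _ => hv v), Finset.sum_comm,
    Finset.sum_congr rfl (fun i _ => hfix i), Finset.sum_const, Finset.card_univ,
    Fintype.card_fin, nsmul_eq_mul]


/-- equation (A2): if the components of the k-bit vector `D` are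
i.i.d. Bernoulli(δ) and `D` is independent of `(X, N)`, then
`H(N | X ⊕ D) ≥ H(N) − k·(1 − h_b(δ))`. -/
theorem entropy_bound_additive_bernoulli_noise
    {Ω S : Type*} [Fintype Ω] [Fintype S]
    (P : FinProb Ω) (k : ℕ) (δ : ℝ) (hδ0 : 0 ≤ δ) (hδ1 : δ ≤ 1)
    (N : Ω → S) (X D : Ω → Fin k → ZMod 2)
    (hD : IIDBern P D δ)
    (hindep : Indep2 P D (fun ω => (X ω, N ω))) :
    entH P N - (k : ℝ) * (1 - hb δ) ≤ condH P N (fun ω => fun i => X ω i + D ω i) := by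
  set Y : Ω → Fin k → ZMod 2 := fun ω => fun i => X ω i + D ω i with hYdef
  set W : Ω → (Fin k → ZMod 2) × S := fun ω => (X ω, N ω) with hWdef
  have hswap : entH P (fun ω => (N ω, Y ω)) = entH P (fun ω => (Y ω, N ω)) :=
    entH_comp_equiv P (fun ω => (Y ω, N ω)) (Equiv.prodComm _ _)
  have hchain : condH P N Y = entH P N - entH P Y + condH P Y N := by
    unfold condH; rw [hswap]; ring
  have hB : condH P Y W ≤ condH P Y N := condH_comp_le P Y W Prod.snd
  have haa : ∀ a : ZMod 2, a + a = 0 := by decide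
  have hinv : Function.Involutive
      (fun p : (Fin k → ZMod 2) × ((Fin k → ZMod 2) × S) =>
        ((fun i => p.2.1 i + p.1 i, p.2) : (Fin k → ZMod 2) × ((Fin k → ZMod 2) × S))) := by
    rintro ⟨d, x, n⟩
    simp only [Prod.mk.injEq]
    refine ⟨funext fun i => ?_, trivial⟩
    show x i + (x i + d i) = d i
    rw [← add_assoc, haa, zero_add]
  have hC : entH P (fun ω => (Y ω, W ω)) = entH P (fun ω => (D ω, W ω)) :=
    entH_comp_equiv P (fun ω => (D ω, W ω)) hinv.toPerm
  have hCD : condH P Y W = condH P D W := by unfold condH; rw [hC]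
  have hD2 : condH P D W = entH P D := by
    unfold condH
    rw [entH_pair_of_indep P D W hindep]
    ring
  have hE : entH P D = k * hb δ := entH_iid_bern P D hD
  have hF : entH P Y ≤ (k : ℝ) := by
    have h := entH_le_logb_card P Y
    have hc : ((Fintype.card (Fin k → ZMod 2) : ℕ) : ℝ) = (2:ℝ)^k := by
      simp [Fintype.card_fun]
    rw [hc, Real.logb_pow] at h
    simpa using h
  linarith [hB, hchain, hCD, hD2, hE, hF]


end FinIT
end
end
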